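/- arXiv:2303.04348 — 5 statements merged into one kernel-verified Lean document; each statement's English description precedes it below -/
import Mathlib

section
/- Let X be a compact Hausdorff topological space, let X₀ be a dense subset of X, and let A be a uniformly bounded set of continuous real-valued functions on X. Then the following are equivalent: (1) every function g : X → ℝ lying in the closure of A in the product topology on ℝ^X is continuous; (2) for every sequence (f_m) of elements of A and every sequence (x_n) of points of X₀, if for every n the limit c(n) = lim_m f_m(x_n) exists and lim_n c(n) exists, and for every m the limit d(m) = lim_n f_m(x_n) exists and lim_m d(m) exists, then lim_n c(n) = lim_m d(m). -/
/-!
By the uniform bound and Tychonoff, `closure A` is compact. If all its elements are continuous,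
take a cluster point `g ∈ closure A` of `(f m)` and a cluster point `p` of `(x n)`; evaluating
at `x n` and at `p` and using continuity of `g` and of the `f m` identifies both iterated limits
with `g p`.

Conversely, if some `g ∈ closure A` is discontinuous, it already fails to be continuous along
`X₀` at some point `p`, so `p` is in the closure of a set `T ⊆ X₀` on which `g` stays `ε`
away from `g p`. Alternately choosing `f m ∈ A` close to `g` at `p` and at the earlier `x n`,
and `x n ∈ T` close to `p` as seen by the earlier `f m`, gives `lim_m f m (x n) = g (x n)`,
`lim_n f m (x n) = f m p` and `lim_m f m p = g p`. Along a subsequence on which `g (x n)`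
converges, the double limit condition forces its limit to be `g p`, which contradicts the
choice of `T`.
-/

open Filter Topology Set Bornology

section DoubleLimit

variable {X Y : Type*} [TopologicalSpace X]

def DoubleLimitProperty [TopologicalSpace Y] (A : Set (X → Y)) (X₀ : Set X) : Prop :=
  ∀ f : ℕ → X → Y, (∀ m, f m ∈ A) → ∀ x : ℕ → X, (∀ n, x n ∈ X₀) →
    ∀ (c d : ℕ → Y) (r s : Y),
      (∀ n, Tendsto (fun m => f m (x n)) atTop (𝓝 (c n))) → Tendsto c atTop (𝓝 r) →
      (∀ m, Tendsto (fun n => f m (x n)) atTop (𝓝 (d m))) → Tendsto d atTop (𝓝 s) →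
      r = s

theorem MapClusterPt.eq_of_tendsto [T2Space X] {α : Type*} {F : Filter α} {u : α → X}
    {a b : X} (h : MapClusterPt a F u) (h' : Tendsto u F (𝓝 b)) : a = b :=
  eq_of_nhds_neBot (ClusterPt.mono h h')

theorem doubleLimitProperty_of_isCompact_closure [CompactSpace X] [TopologicalSpace Y]
    [T2Space Y] {A : Set (X → Y)} (hK : IsCompact (closure A))
    (h : ∀ g ∈ closure A, Continuous g) (X₀ : Set X) : DoubleLimitProperty A X₀ := by
  intro f hf x _ c d r s hc hr hd hs
  obtain ⟨g, hgA, hg⟩ := hK.exists_mapClusterPt (f := atTop)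
    (tendsto_principal.2 (Eventually.of_forall fun m => subset_closure (hf m)))
  obtain ⟨p, hp⟩ := exists_clusterPt_of_compactSpace (map x atTop)
  replace hp : MapClusterPt p atTop x := hp
  have hgx (n : ℕ) : g (x n) = c n :=
    (hg.continuousAt_comp (continuous_apply (x n)).continuousAt).eq_of_tendsto (hc n)
  have hfp (m : ℕ) : f m p = d m :=
    (hp.continuousAt_comp (h _ (subset_closure (hf m))).continuousAt).eq_of_tendsto (hd m)
  calc r = g p := ((hp.continuousAt_comp (h g hgA).continuousAt).eq_of_tendsto
          (hr.congr fun n => (hgx n).symm)).symm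
    _ = s := (hg.continuousAt_comp (continuous_apply p).continuousAt).eq_of_tendsto
          (hs.congr fun m => (hfp m).symm)

theorem Dense.continuous_of_tendsto_nhdsWithin [TopologicalSpace Y] [T3Space Y]
    {s : Set X} (hs : Dense s) {g : X → Y} (h : ∀ x, Tendsto g (𝓝[s] x) (𝓝 (g x))) :
    Continuous g := by
  have hext : extendFrom s g = g := funext fun x => extendFrom_eq (hs x) (h x)
  exact hext ▸ continuous_extendFrom hs fun x => ⟨g x, h x⟩

theorem tendsto_of_eventually_dist_lt [PseudoMetricSpace Y] {ι : Type*} {l : Filter ι}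
    {u : ι → Y} {y : Y} {ε : ι → ℝ} (hε : Tendsto ε l (𝓝 0))
    (h : ∀ᶠ i in l, dist (u i) y < ε i) : Tendsto u l (𝓝 y) :=
  tendsto_iff_dist_tendsto_zero.2 <|
    squeeze_zero' (Eventually.of_forall fun _ => dist_nonneg) (h.mono fun _ => le_of_lt) hε

section PseudoMetric

variable [PseudoMetricSpace Y] {A : Set (X → Y)} {g : X → Y} {T : Set X} {p : X}

theorem exists_approx_pair_of_mem_closure (hcont : ∀ f ∈ A, Continuous f) (hg : g ∈ closure A)
    (hp : p ∈ closure T) {ι : Type*} (s : Finset ι) (fs : ι → X → Y)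
    (hfs : ∀ i ∈ s, fs i ∈ A) (xs : ι → X) {δ : ℝ} (hδ : 0 < δ) :
    ∃ f ∈ A, ∃ x ∈ T, dist (f p) (g p) < δ ∧ dist (f x) (f p) < δ ∧
      ∀ i ∈ s, dist (f (xs i)) (g (xs i)) < δ ∧ dist (fs i x) (fs i p) < δ := by
  have near_g (y : X) : ∀ᶠ f in 𝓝 g, dist (f y) (g y) < δ :=
    Metric.tendsto_nhds.1 ((continuous_apply y).tendsto g) δ hδ
  have near_p {f : X → Y} (hf : f ∈ A) : ∀ᶠ x in 𝓝 p, dist (f x) (f p) < δ :=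
    Metric.tendsto_nhds.1 ((hcont f hf).tendsto p) δ hδ
  obtain ⟨f, hfA, hfp, hfxs⟩ := ((mem_closure_iff_frequently.1 hg).and_eventually
    ((near_g p).and (s.eventually_all.2 fun i _ => near_g (xs i)))).exists
  obtain ⟨x, hxT, hxf, hxs⟩ := ((mem_closure_iff_frequently.1 hp).and_eventually
    ((near_p hfA).and (s.eventually_all.2 fun i hi => near_p (hfs i hi)))).exists
  exact ⟨f, hfA, x, hxT, hfp, hxf, fun i hi => ⟨hfxs i hi, hxs i hi⟩⟩

theorem exists_seq_tendsto_of_mem_closure (hcont : ∀ f ∈ A, Continuous f) (hg : g ∈ closure A)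
    (hp : p ∈ closure T) :
    ∃ (f : ℕ → X → Y) (x : ℕ → X), (∀ m, f m ∈ A) ∧ (∀ n, x n ∈ T) ∧
      (∀ n, Tendsto (fun m => f m (x n)) atTop (𝓝 (g (x n)))) ∧
      (∀ m, Tendsto (fun n => f m (x n)) atTop (𝓝 (f m p))) ∧
      Tendsto (fun m => f m p) atTop (𝓝 (g p)) := by
  -- A stage `(k, f, x)` carries its own tolerance `τ k`; stages are chosen with increasing `k`.
  let τ (k : ℕ) : ℝ := 1 / ((k : ℝ) + 1)
  let P (a : ℕ × (X → Y) × X) : Prop := a.2.1 ∈ A ∧ a.2.2 ∈ T ∧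
    dist (a.2.1 p) (g p) < τ a.1 ∧ dist (a.2.1 a.2.2) (a.2.1 p) < τ a.1
  let R (a b : ℕ × (X → Y) × X) : Prop := a.1 < b.1 ∧
    dist (b.2.1 a.2.2) (g a.2.2) < τ b.1 ∧ dist (a.2.1 b.2.2) (a.2.1 p) < τ b.1
  obtain ⟨F, hP, hR⟩ := exists_seq_of_forall_finset_exists P R fun s hs => by
    obtain ⟨f, hfA, x, hxT, hfp, hxf, hs'⟩ := exists_approx_pair_of_mem_closure hcont hg hp s
      (fun a => a.2.1) (fun a ha => (hs a ha).1) (fun a => a.2.2)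
      (Nat.one_div_pos_of_nat (n := s.sup Prod.fst + 1))
    exact ⟨(s.sup Prod.fst + 1, f, x), ⟨hfA, hxT, hfp, hxf⟩, fun a ha =>
      ⟨Nat.lt_succ_of_le (Finset.le_sup (f := Prod.fst) ha), hs' a ha⟩⟩
  have hk : StrictMono fun n => (F n).1 :=
    strictMono_nat_of_lt_succ fun n => (hR n _ n.lt_succ_self).1
  have hτ : Tendsto (fun n => τ (F n).1) atTop (𝓝 0) :=
    tendsto_one_div_add_atTop_nhds_zero_nat.comp hk.tendsto_atTop
  refine ⟨fun m => (F m).2.1, fun n => (F n).2.2, fun m => (hP m).1, fun n => (hP n).2.1,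
    fun n => tendsto_of_eventually_dist_lt hτ ?_, fun m => tendsto_of_eventually_dist_lt hτ ?_,
    tendsto_of_eventually_dist_lt hτ (Eventually.of_forall fun m => (hP m).2.2.1)⟩
  · exact (eventually_gt_atTop n).mono fun m hm => (hR n m hm).2.1
  · filter_upwards [eventually_ge_atTop m] with n hn
    rcases hn.eq_or_lt with rfl | hn
    exacts [(hP m).2.2.2, (hR m n hn).2.2]

end PseudoMetric

theorem continuous_of_doubleLimitProperty [MetricSpace Y] [ProperSpace Y] {X₀ : Set X}
    (hX₀ : Dense X₀) {A : Set (X → Y)} (hcont : ∀ f ∈ A, Continuous f)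
    (hA : DoubleLimitProperty A X₀) {g : X → Y} (hg : g ∈ closure A)
    (hbdd : IsBounded (range g)) : Continuous g := by
  refine hX₀.continuous_of_tendsto_nhdsWithin fun p => Metric.tendsto_nhds.2 fun ε hε => ?_
  by_contra hfar
  have hp : p ∈ closure {y ∈ X₀ | ε ≤ dist (g y) (g p)} := by
    simp only [not_eventually, not_lt, frequently_nhdsWithin_iff] at hfar
    exact mem_closure_iff_frequently.2 (hfar.mono fun y hy => ⟨hy.2, hy.1⟩)
  obtain ⟨f, x, hfA, hxT, hcol, hrow, hdiag⟩ := exists_seq_tendsto_of_mem_closure hcont hg hp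
  obtain ⟨r, -, φ, hφ, hr⟩ := tendsto_subseq_of_bounded hbdd fun n => mem_range_self (x n)
  have hrp : r = g p := hA f hfA (x ∘ φ) (fun n => (hxT (φ n)).1) _ _ r (g p)
    (fun n => hcol (φ n)) hr (fun m => (hrow m).comp hφ.tendsto_atTop) hdiag
  have hgap : ε ≤ dist r (g p) :=
    ge_of_tendsto (hr.dist tendsto_const_nhds) (Eventually.of_forall fun n => (hxT (φ n)).2)
  rw [hrp, dist_self] at hgap
  exact hgap.not_gt hε

end DoubleLimit

theorem grothendieck_double_limit_general {X : Type*} [TopologicalSpace X] [CompactSpace X]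
    (X₀ : Set X) (hX₀ : Dense X₀)
    (A : Set (X → ℝ)) (hcont : ∀ f ∈ A, Continuous f)
    (C : ℝ) (hbd : ∀ f ∈ A, ∀ x, |f x| ≤ C) :
    (∀ g ∈ closure A, Continuous g) ↔
      (∀ (f : ℕ → X → ℝ), (∀ m, f m ∈ A) →
        ∀ (x : ℕ → X), (∀ n, x n ∈ X₀) →
        ∀ (c d : ℕ → ℝ) (r s : ℝ),
          (∀ n, Tendsto (fun m => f m (x n)) atTop (𝓝 (c n))) →
          Tendsto c atTop (𝓝 r) →
          (∀ m, Tendsto (fun n => f m (x n)) atTop (𝓝 (d m))) →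
          Tendsto d atTop (𝓝 s) →
          r = s) := by
  have hcube : closure A ⊆ univ.pi fun _ => Icc (-C) C :=
    closure_minimal (fun f hf x _ => abs_le.1 (hbd f hf x))
      (isClosed_set_pi fun _ _ => isClosed_Icc)
  refine ⟨fun h => doubleLimitProperty_of_isCompact_closure ?_ h X₀,
    fun h g hg => continuous_of_doubleLimitProperty hX₀ hcont h hg ?_⟩
  · exact (isCompact_univ_pi fun _ => isCompact_Icc).of_isClosed_subset isClosed_closure hcube
  · exact (Metric.isBounded_Icc (-C) C).subset
      (range_subset_iff.2 fun x => hcube hg x (mem_univ x))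

/-- Grothendieck's double limit theorem (special case for `C(X)`):
for a compact Hausdorff `X`, a dense `X₀ ⊆ X`, and a uniformly bounded family `A`
of continuous functions, every pointwise-closure point of `A` is continuous iff
the double limit condition holds for sequences from `A` and from `X₀`. -/
theorem grothendieck_double_limit {X : Type*} [TopologicalSpace X] [CompactSpace X] [T2Space X]
    (X₀ : Set X) (hX₀ : Dense X₀)
    (A : Set (X → ℝ)) (hcont : ∀ f ∈ A, Continuous f)
    (C : ℝ) (hbd : ∀ f ∈ A, ∀ x, |f x| ≤ C) :
    (∀ g ∈ closure A, Continuous g) ↔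
      (∀ (f : ℕ → X → ℝ), (∀ m, f m ∈ A) →
        ∀ (x : ℕ → X), (∀ n, x n ∈ X₀) →
        ∀ (c d : ℕ → ℝ) (r s : ℝ),
          (∀ n, Tendsto (fun m => f m (x n)) atTop (𝓝 (c n))) →
          Tendsto c atTop (𝓝 r) →
          (∀ m, Tendsto (fun n => f m (x n)) atTop (𝓝 (d m))) →
          Tendsto d atTop (𝓝 s) →
          r = s) :=
  grothendieck_double_limit_general X₀ hX₀ A hcont C hbd
end

section
/- Let X be a compact Hausdorff topological space, let X₀ be a dense subset of X, and let A be a uniformly bounded set of continuous real-valued functions on X. Suppose that for every sequence (f_m) of elements of A and every sequence (x_n) of points of X₀, whenever both iterated limits lim_n lim_m f_m(x_n) and lim_m lim_n f_m(x_n) exist (all inner limits exist and the outer limits of the inner limits exist), they are equal. Then every function g : X → ℝ lying in the closure of A in the product topology on ℝ^X is continuous. -/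
open Filter Topology

/-!
If `g` lies in the pointwise closure of `A` but does not tend to `g p` along `X₀` at some point `p`,
one builds, alternately, functions `f m ∈ A` that approximate `g` ever better at `p` and at the
points chosen so far, and points `x n ∈ X₀` at which `g` stays `ε`-far from `g p` while the
functions chosen so far are ever closer to their values at `p`. Then `lim_m f m (x n) = g (x n)`
and `lim_n f m (x n) = f m p → g p`, so along a subsequence on which `g (x n)` converges the two
iterated limits are `lim g (x n)` and `g p`, which are at least `ε` apart. Hence `g` is continuous
along the dense set `X₀` at every point, and therefore continuous.
-/

theorem exists_seq_interleaved {α β : Type*} [DecidableEq α] [DecidableEq β]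
    {P : ℕ → Finset β → α → Prop} {Q : ℕ → Finset α → β → Prop}
    (hP : ∀ n s, ∃ a, P n s a) (hQ : ∀ n t, ∃ b, Q n t b) :
    ∃ (a : ℕ → α) (b : ℕ → β), (∀ n, P n ((Finset.range n).image b) (a n)) ∧
      ∀ n, Q n ((Finset.range (n + 1)).image a) (b n) := by
  choose a' ha' using hP
  choose b' hb' using hQ
  let next (n : ℕ) (st : Finset α × Finset β) : Finset α × Finset β :=
    (insert (a' n st.2) st.1, insert (b' n (insert (a' n st.2) st.1)) st.2)
  let st : ℕ → Finset α × Finset β := fun n => Nat.rec (∅, ∅) next n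
  let a : ℕ → α := fun n => a' n (st n).2
  let b : ℕ → β := fun n => b' n (insert (a n) (st n).1)
  have hst : ∀ n, st n = ((Finset.range n).image a, (Finset.range n).image b) := by
    intro n
    induction n with
    | zero => rfl
    | succ n ih =>
      change (insert (a n) (st n).1, insert (b n) (st n).2) = _
      rw [ih, Finset.range_add_one, Finset.image_insert, Finset.image_insert]
  refine ⟨a, b, fun n => ?_, fun n => ?_⟩
  · convert ha' n (st n).2 using 2
    rw [hst]
  · convert hb' n (insert (a n) (st n).1) using 2
    rw [hst, Finset.range_add_one, Finset.image_insert]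

theorem tendsto_of_eventually_dist_lt_one_div_add_one {E : Type*} [PseudoMetricSpace E]
    {u : ℕ → E} {a : E} (h : ∀ᶠ n in atTop, dist (u n) a < 1 / ((n : ℝ) + 1)) :
    Tendsto u atTop (𝓝 a) :=
  tendsto_iff_dist_tendsto_zero.2 <| squeeze_zero' (.of_forall fun _ => dist_nonneg)
    (h.mono fun _ => le_of_lt) tendsto_one_div_add_atTop_nhds_zero_nat

theorem exists_forall_dist_lt_of_mem_closure {ι E : Type*} [PseudoMetricSpace E]
    {A : Set (ι → E)} {g : ι → E} (hg : g ∈ closure A) (S : Finset ι) {η : ℝ} (hη : 0 < η) :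
    ∃ f ∈ A, ∀ i ∈ S, dist (f i) (g i) < η := by
  have hU : (S : Set ι).pi (fun i => Metric.ball (g i) η) ∈ 𝓝 g :=
    set_pi_mem_nhds S.finite_toSet fun i _ => Metric.ball_mem_nhds _ hη
  obtain ⟨f, hfU, hfA⟩ := mem_closure_iff_nhds.1 hg _ hU
  exact ⟨f, hfA, fun i hi => hfU i hi⟩

theorem abs_le_of_mem_closure {ι : Type*} {A : Set (ι → ℝ)} {C : ℝ}
    (hA : ∀ f ∈ A, ∀ i, |f i| ≤ C) {g : ι → ℝ} (hg : g ∈ closure A) (i : ι) : |g i| ≤ C :=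
  closure_minimal (fun f hf => hA f hf i)
    (isClosed_le (continuous_apply i).abs continuous_const) hg

theorem Filter.Frequently.exists_mem_forall_dist_lt {X ι E : Type*} [TopologicalSpace X]
    [PseudoMetricSpace E] {s : Set X} {p : X} {q : X → Prop} (h : ∃ᶠ u in 𝓝[s] p, q u)
    (F : Finset ι) {f : ι → X → E} (hf : ∀ i ∈ F, Continuous (f i)) {δ : ℝ} (hδ : 0 < δ) :
    ∃ u ∈ s, q u ∧ ∀ i ∈ F, dist (f i u) (f i p) < δ := by
  have hnear : ∀ᶠ u in 𝓝 p, ∀ i ∈ F, dist (f i u) (f i p) < δ :=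
    (eventually_all_finset F).2 fun i hi => Metric.tendsto_nhds.1 ((hf i hi).tendsto p) δ hδ
  obtain ⟨u, hqu, hsu, hu⟩ :=
    (h.and_eventually (eventually_mem_nhdsWithin.and (nhdsWithin_le_nhds hnear))).exists
  exact ⟨u, hsu, hqu, hu⟩

theorem continuous_of_forall_tendsto_nhdsWithin_of_dense {X Y : Type*} [TopologicalSpace X]
    [TopologicalSpace Y] [T3Space Y] {s : Set X} (hs : Dense s) {f : X → Y}
    (hf : ∀ x, Tendsto f (𝓝[s] x) (𝓝 (f x))) : Continuous f := by
  have hext : extendFrom s f = f := funext fun x => extendFrom_eq (hs x) (hf x)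
  exact hext ▸ continuous_extendFrom hs fun x => ⟨f x, hf x⟩

def DoubleLimitCondition {X : Type*} (A : Set (X → ℝ)) (X₀ : Set X) : Prop :=
  ∀ (f : ℕ → X → ℝ), (∀ m, f m ∈ A) →
    ∀ (x : ℕ → X), (∀ n, x n ∈ X₀) →
    ∀ (c d : ℕ → ℝ) (r s : ℝ),
      (∀ n, Tendsto (fun m => f m (x n)) atTop (𝓝 (c n))) →
      Tendsto c atTop (𝓝 r) →
      (∀ m, Tendsto (fun n => f m (x n)) atTop (𝓝 (d m))) →
      Tendsto d atTop (𝓝 s) →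
      r = s

theorem DoubleLimitCondition.tendsto_nhdsWithin_of_mem_closure {X : Type*} [TopologicalSpace X]
    {A : Set (X → ℝ)} {X₀ : Set X} (hdl : DoubleLimitCondition A X₀)
    (hcont : ∀ f ∈ A, Continuous f) {C : ℝ} (hbd : ∀ f ∈ A, ∀ x, |f x| ≤ C)
    {g : X → ℝ} (hg : g ∈ closure A) (p : X) : Tendsto g (𝓝[X₀] p) (𝓝 (g p)) := by
  classical
  by_contra hgp
  obtain ⟨ε, hε, hfar⟩ : ∃ ε > 0, ∃ᶠ u in 𝓝[X₀] p, ε ≤ dist (g u) (g p) := by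
    simpa [Metric.tendsto_nhds] using hgp
  have hpos (n : ℕ) : (0 : ℝ) < 1 / ((n : ℝ) + 1) := by positivity
  obtain ⟨f, x, hf, hx⟩ := exists_seq_interleaved (α := A) (β := X)
    (P := fun m S f => ∀ u ∈ insert p S, dist ((f : X → ℝ) u) (g u) < 1 / ((m : ℝ) + 1))
    (Q := fun n F x => x ∈ X₀ ∧ ε ≤ dist (g x) (g p) ∧
      ∀ f ∈ F, dist ((f : X → ℝ) x) ((f : X → ℝ) p) < 1 / ((n : ℝ) + 1))
    (fun m S => by
      obtain ⟨f, hfA, hf⟩ := exists_forall_dist_lt_of_mem_closure hg (insert p S) (hpos m)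
      exact ⟨⟨f, hfA⟩, hf⟩)
    (fun n F => hfar.exists_mem_forall_dist_lt F (fun f _ => hcont f f.2) (hpos n))
  have hlim_m (n : ℕ) : Tendsto (fun m => (f m : X → ℝ) (x n)) atTop (𝓝 (g (x n))) :=
    tendsto_of_eventually_dist_lt_one_div_add_one <| (eventually_gt_atTop n).mono fun m hm =>
      hf m (x n) (Finset.mem_insert_of_mem (Finset.mem_image_of_mem x (Finset.mem_range.2 hm)))
  have hlim_n (m : ℕ) : Tendsto (fun n => (f m : X → ℝ) (x n)) atTop (𝓝 ((f m : X → ℝ) p)) :=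
    tendsto_of_eventually_dist_lt_one_div_add_one <| (eventually_ge_atTop m).mono fun n hn =>
      (hx n).2.2 (f m) (Finset.mem_image_of_mem f (Finset.mem_range.2 (Nat.lt_succ_of_le hn)))
  have hlim_p : Tendsto (fun m => (f m : X → ℝ) p) atTop (𝓝 (g p)) :=
    tendsto_of_eventually_dist_lt_one_div_add_one <|
      .of_forall fun m => hf m p (Finset.mem_insert_self _ _)
  obtain ⟨r, -, φ, hφ, hr⟩ := tendsto_subseq_of_bounded (Metric.isBounded_closedBall (x := 0))
    (x := fun n => g (x n)) fun n => by simpa using abs_le_of_mem_closure hbd hg (x n)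
  have hrp : r = g p := hdl (fun m => f m) (fun m => (f m).2) (x ∘ φ) (fun k => (hx (φ k)).1)
    _ _ r (g p) (fun k => hlim_m (φ k)) hr (fun m => (hlim_n m).comp hφ.tendsto_atTop) hlim_p
  have hrfar : ε ≤ dist r (g p) :=
    ge_of_tendsto (hr.dist tendsto_const_nhds) (.of_forall fun k => (hx (φ k)).2.1)
  rw [hrp, dist_self] at hrfar
  exact hrfar.not_gt hε

theorem continuous_of_double_limit_general {X : Type*} [TopologicalSpace X]
    (X₀ : Set X) (hX₀ : Dense X₀)
    (A : Set (X → ℝ)) (hcont : ∀ f ∈ A, Continuous f)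
    (C : ℝ) (hbd : ∀ f ∈ A, ∀ x, |f x| ≤ C)
    (hdl : ∀ (f : ℕ → X → ℝ), (∀ m, f m ∈ A) →
        ∀ (x : ℕ → X), (∀ n, x n ∈ X₀) →
        ∀ (c d : ℕ → ℝ) (r s : ℝ),
          (∀ n, Tendsto (fun m => f m (x n)) atTop (𝓝 (c n))) →
          Tendsto c atTop (𝓝 r) →
          (∀ m, Tendsto (fun n => f m (x n)) atTop (𝓝 (d m))) →
          Tendsto d atTop (𝓝 s) →
          r = s) :
    ∀ g ∈ closure A, Continuous g := fun _ hg =>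
  continuous_of_forall_tendsto_nhdsWithin_of_dense hX₀
    (DoubleLimitCondition.tendsto_nhdsWithin_of_mem_closure hdl hcont hbd hg)

/-- The main implication of Grothendieck's double limit theorem:
if the double limit condition holds for `A` relative to a dense set `X₀`,
then every function in the pointwise closure of `A` is continuous. -/
theorem continuous_of_double_limit {X : Type*} [TopologicalSpace X] [CompactSpace X] [T2Space X]
    (X₀ : Set X) (hX₀ : Dense X₀)
    (A : Set (X → ℝ)) (hcont : ∀ f ∈ A, Continuous f)
    (C : ℝ) (hbd : ∀ f ∈ A, ∀ x, |f x| ≤ C)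
    (hdl : ∀ (f : ℕ → X → ℝ), (∀ m, f m ∈ A) →
        ∀ (x : ℕ → X), (∀ n, x n ∈ X₀) →
        ∀ (c d : ℕ → ℝ) (r s : ℝ),
          (∀ n, Tendsto (fun m => f m (x n)) atTop (𝓝 (c n))) →
          Tendsto c atTop (𝓝 r) →
          (∀ m, Tendsto (fun n => f m (x n)) atTop (𝓝 (d m))) →
          Tendsto d atTop (𝓝 s) →
          r = s) :
    ∀ g ∈ closure A, Continuous g :=
  continuous_of_double_limit_general X₀ hX₀ A hcont C hbd hdl
end

section
/- Let X be a compact Hausdorff topological space, let X₀ be a dense subset of X, and let A be a uniformly bounded set of continuous real-valued functions on X. Suppose that every function g : X → ℝ lying in the closure of A in the product topology on ℝ^X is continuous. Then for every sequence (f_m) of elements of A and every sequence (x_n) of points of X₀, if for every n the limit c(n) = lim_m f_m(x_n) exists and lim_n c(n) exists, and for every m the limit d(m) = lim_n f_m(x_n) exists and lim_m d(m) exists, then lim_n c(n) = lim_m d(m). -/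
/-!
Fix an ultrafilter `U` finer than `atTop`. By compactness of `X`, the points `x n` converge
along `U` to some `x₀`; by Tychonoff, the uniformly bounded functions `f m` converge pointwise
along `U` to some `g` in the closure of `A`, which is continuous by hypothesis. Then both
iterated limits equal `g x₀`: the inner limits are `c n = g (x n)` and `d m = f m x₀`, and
continuity of `g` and of each `f m` at `x₀` identifies the outer limits.
-/

open Filter Topology

theorem isCompact_closure_of_forall_abs_le {X : Type*} {A : Set (X → ℝ)} {C : ℝ}
    (hbd : ∀ f ∈ A, ∀ x, |f x| ≤ C) : IsCompact (closure A) :=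
  (isCompact_univ_pi fun _ => isCompact_Icc).closure_of_subset
    fun f hf x _ => abs_le.mp (hbd f hf x)

theorem iterated_limits_eq_of_tendsto {ι κ X Y : Type*} [TopologicalSpace X]
    [TopologicalSpace Y] [T2Space Y] {l : Filter ι} {l' : Filter κ} [l.NeBot] [l'.NeBot]
    {f : ι → X → Y} {g : X → Y} {x : κ → X} {x₀ : X}
    (hfg : Tendsto f l (𝓝 g)) (hx : Tendsto x l' (𝓝 x₀))
    (hg : ContinuousAt g x₀) (hf : ∀ m, ContinuousAt (f m) x₀)
    {c : κ → Y} {d : ι → Y} {r s : Y}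
    (hc : ∀ n, Tendsto (fun m => f m (x n)) l (𝓝 (c n))) (hr : Tendsto c l' (𝓝 r))
    (hd : ∀ m, Tendsto (fun n => f m (x n)) l' (𝓝 (d m))) (hs : Tendsto d l (𝓝 s)) :
    r = s := by
  have hfg' : ∀ y, Tendsto (fun m => f m y) l (𝓝 (g y)) := tendsto_pi_nhds.mp hfg
  have hc_eq : c = g ∘ x := funext fun n => tendsto_nhds_unique (hc n) (hfg' (x n))
  have hd_eq : d = fun m => f m x₀ :=
    funext fun m => tendsto_nhds_unique (hd m) ((hf m).tendsto.comp hx)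
  have hr_eq : r = g x₀ := tendsto_nhds_unique hr (hc_eq ▸ hg.tendsto.comp hx)
  have hs_eq : s = g x₀ := tendsto_nhds_unique hs (hd_eq ▸ hfg' x₀)
  rw [hr_eq, hs_eq]

theorem double_limit_of_continuous_closure_general {X : Type*} [TopologicalSpace X] [CompactSpace X]
    (X₀ : Set X)
    (A : Set (X → ℝ)) (hcont : ∀ f ∈ A, Continuous f)
    (C : ℝ) (hbd : ∀ f ∈ A, ∀ x, |f x| ≤ C)
    (hcl : ∀ g ∈ closure A, Continuous g) :
    ∀ (f : ℕ → X → ℝ), (∀ m, f m ∈ A) →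
      ∀ (x : ℕ → X), (∀ n, x n ∈ X₀) →
      ∀ (c d : ℕ → ℝ) (r s : ℝ),
        (∀ n, Tendsto (fun m => f m (x n)) atTop (𝓝 (c n))) →
        Tendsto c atTop (𝓝 r) →
        (∀ m, Tendsto (fun n => f m (x n)) atTop (𝓝 (d m))) →
        Tendsto d atTop (𝓝 s) →
        r = s := by
  intro f hf x _ c d r s hc hr hd hs
  obtain ⟨U, hU⟩ : ∃ U : Ultrafilter ℕ, (U : Filter ℕ) ≤ atTop :=
    ⟨_, Ultrafilter.of_le atTop⟩
  obtain ⟨x₀, -, hx₀⟩ := isCompact_univ.ultrafilter_le_nhds (U.map x) (by simp)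
  have hfA : ↑(U.map f) ≤ 𝓟 (closure A) :=
    le_principal_iff.mpr (mem_map.mpr (univ_mem' fun m => subset_closure (hf m)))
  obtain ⟨g, hgA, hg⟩ := (isCompact_closure_of_forall_abs_le hbd).ultrafilter_le_nhds _ hfA
  exact iterated_limits_eq_of_tendsto (l := (U : Filter ℕ)) hg hx₀ (hcl g hgA).continuousAt
    (fun m => (hcont _ (hf m)).continuousAt) (fun n => (hc n).mono_left hU) (hr.mono_left hU)
    (fun m => (hd m).mono_left hU) (hs.mono_left hU)

/-- The converse implication of Grothendieck's double limit theorem: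
if every function in the pointwise closure of `A` is continuous,
then the double limit condition holds for `A` relative to the dense set `X₀`. -/
theorem double_limit_of_continuous_closure {X : Type*} [TopologicalSpace X] [CompactSpace X]
    [T2Space X]
    (X₀ : Set X) (hX₀ : Dense X₀)
    (A : Set (X → ℝ)) (hcont : ∀ f ∈ A, Continuous f)
    (C : ℝ) (hbd : ∀ f ∈ A, ∀ x, |f x| ≤ C)
    (hcl : ∀ g ∈ closure A, Continuous g) :
    ∀ (f : ℕ → X → ℝ), (∀ m, f m ∈ A) →
      ∀ (x : ℕ → X), (∀ n, x n ∈ X₀) →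
      ∀ (c d : ℕ → ℝ) (r s : ℝ),
        (∀ n, Tendsto (fun m => f m (x n)) atTop (𝓝 (c n))) →
        Tendsto c atTop (𝓝 r) →
        (∀ m, Tendsto (fun n => f m (x n)) atTop (𝓝 (d m))) →
        Tendsto d atTop (𝓝 s) →
        r = s :=
  double_limit_of_continuous_closure_general X₀ A hcont C hbd hcl
end

section
/- Let X be a compact Hausdorff topological space and let A be a bounded subset of the Banach space C(X) of continuous real-valued functions on X with the supremum norm. Then A is relatively compact in the weak topology of C(X) (i.e., the closure of A in the weak topology is compact) if and only if for every sequence (f_m) of elements of A and every sequence (x_n) of points of X, whenever both iterated limits lim_n lim_m f_m(x_n) and lim_m lim_n f_m(x_n) exist, they are equal. -/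
open Filter Topology

set_option linter.unusedSectionVars false

section GrothendieckProof


variable {X : Type*} [TopologicalSpace X]

/-- Membership in pointwise closure via finite approximation. -/
lemma mem_closure_pi_iff {S : Set (X → ℝ)} {g : X → ℝ} :
    g ∈ closure S ↔ ∀ (F : Finset X) (δ : ℝ), 0 < δ → ∃ f ∈ S, ∀ x ∈ F, |f x - g x| < δ := by
  constructor
  · intro hg F δ hδ
    have hN : {h : X → ℝ | ∀ x ∈ F, |h x - g x| < δ} ∈ 𝓝 g := by
      have : {h : X → ℝ | ∀ x ∈ F, |h x - g x| < δ}
          = ⋂ x ∈ F, (fun h : X → ℝ => h x) ⁻¹' Metric.ball (g x) δ := by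
        ext h
        simp [Real.dist_eq, Set.mem_iInter]
      rw [this]
      refine (Filter.biInter_finset_mem F).2 fun x _ => ?_
      exact (continuous_apply x).continuousAt.preimage_mem_nhds
        (Metric.ball_mem_nhds _ hδ)
    rcases mem_closure_iff_nhds.1 hg _ hN with ⟨f, hf1, hf2⟩
    exact ⟨f, hf2, hf1⟩
  · intro h
    rw [mem_closure_iff_nhds]
    intro U hU
    rcases mem_nhds_iff.1 hU with ⟨V, hVU, hV, hgV⟩
    rcases isOpen_pi_iff.1 hV g hgV with ⟨I, u, hu, hpi⟩
    have hδ : ∃ δ : ℝ, 0 < δ ∧ ∀ x ∈ I, Metric.ball (g x) δ ⊆ u x := by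
      have : ∀ x ∈ I, ∃ δ : ℝ, 0 < δ ∧ Metric.ball (g x) δ ⊆ u x := fun x hx =>
        Metric.isOpen_iff.1 (hu x hx).1 (g x) (hu x hx).2
      choose! δ hδ using this
      rcases I.eq_empty_or_nonempty with rfl | hne
      · exact ⟨1, one_pos, by simp⟩
      · refine ⟨I.inf' hne δ, ?_, fun x hx => ?_⟩
        · rcases Finset.exists_mem_eq_inf' hne δ with ⟨x, hx, hd⟩
          rw [hd]; exact (hδ x hx).1
        · exact subset_trans (Metric.ball_subset_ball (Finset.inf'_le δ hx)) (hδ x hx).2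
    rcases hδ with ⟨δ, hδpos, hδ⟩
    rcases h I δ hδpos with ⟨f, hfS, hf⟩
    refine ⟨f, hVU (hpi fun x hx => hδ x hx ?_), hfS⟩
    rw [Metric.mem_ball, Real.dist_eq]
    exact hf x hx


lemma tendsto_of_abs_le_one_div {u : ℝ} {v : ℕ → ℝ}
    (h : ∀ᶠ m in atTop, |v m - u| ≤ 1 / (m + 1)) : Tendsto v atTop (𝓝 u) := by
  have h0 : Tendsto (fun m : ℕ => v m - u) atTop (𝓝 0) := by
    apply squeeze_zero_norm' h
    exact tendsto_one_div_add_atTop_nhds_zero_nat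
  have := h0.add_const u
  simpa using this



lemma lemA {A : Set C(X, ℝ)} {M : ℝ} (hM : ∀ f ∈ A, ∀ x, |f x| ≤ M)
    (DL : ∀ (f : ℕ → C(X, ℝ)), (∀ m, f m ∈ A) →
        ∀ (x : ℕ → X),
        ∀ (c d : ℕ → ℝ) (r s : ℝ),
          (∀ n, Tendsto (fun m => f m (x n)) atTop (𝓝 (c n))) →
          Tendsto c atTop (𝓝 r) →
          (∀ m, Tendsto (fun n => f m (x n)) atTop (𝓝 (d m))) →
          Tendsto d atTop (𝓝 s) →
          r = s)
    {g : X → ℝ} (hg : g ∈ closure ((fun f : C(X, ℝ) => ⇑f) '' A)) :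
    Continuous g := by
  classical
  -- approximation property
  have happrox : ∀ (F : Finset X) (δ : ℝ), 0 < δ → ∃ f ∈ A, ∀ x ∈ F, |f x - g x| < δ := by
    intro F δ hδ
    rcases mem_closure_pi_iff.1 hg F δ hδ with ⟨f', ⟨f, hfA, rfl⟩, hf⟩
    exact ⟨f, hfA, hf⟩
  -- bound on g
  have hgM : ∀ x, |g x| ≤ M := by
    intro x
    by_contra hcon
    push_neg at hcon
    rcases happrox {x} (|g x| - M) (by linarith) with ⟨f, hfA, hf⟩
    have h1 := hf x (Finset.mem_singleton_self x)
    have h2 := hM f hfA x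
    have := abs_sub_abs_le_abs_sub (g x) (f x)
    rw [abs_sub_comm] at this
    linarith
  by_contra hgc
  -- find a point of discontinuity
  rw [continuous_iff_continuousAt] at hgc
  push_neg at hgc
  obtain ⟨x₀, hx₀⟩ := hgc
  rw [ContinuousAt, Metric.tendsto_nhds] at hx₀
  push_neg at hx₀
  obtain ⟨ε, hεpos, hx₀⟩ := hx₀
  have hdisc : ∀ U ∈ 𝓝 x₀, ∃ x ∈ U, ε ≤ |g x - g x₀| := by
    intro U hU
    by_contra hcon
    push_neg at hcon
    exact hx₀ (Filter.eventually_iff_exists_mem.2 ⟨U, hU, fun x hx => by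
      show ¬ (ε ≤ dist (g x) (g x₀)); rw [Real.dist_eq]; exact not_le.2 (hcon x hx)⟩)
  -- recursive construction
  set α := ℕ × C(X, ℝ) × X
  set P : α → Prop := fun p => p.2.1 ∈ A ∧ |p.2.1 x₀ - g x₀| < 1 / (p.1 + 1) ∧
      |p.2.1 p.2.2 - p.2.1 x₀| < 1 / (p.1 + 1) ∧ ε ≤ |g p.2.2 - g x₀| with hP
  set r : α → α → Prop := fun p q => p.1 < q.1 ∧ |q.2.1 p.2.2 - g p.2.2| < 1 / (q.1 + 1) ∧
      |p.2.1 q.2.2 - p.2.1 x₀| < 1 / (q.1 + 1) with hr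
  obtain ⟨q, hqP, hqr⟩ : ∃ q : ℕ → α, (∀ n, P (q n)) ∧ ∀ m n, m < n → r (q m) (q n) := by
    apply exists_seq_of_forall_finset_exists P r
    intro s hs
    set N : ℕ := 1 + s.sup (fun p => p.1) with hN
    have hNpos : (0 : ℝ) < 1 / (N + 1) := by positivity
    obtain ⟨fN, hfNA, hfN⟩ := happrox (insert x₀ (s.image fun p => p.2.2)) _ hNpos
    -- the neighborhood of x₀
    set G : Finset C(X, ℝ) := insert fN (s.image fun p => p.2.1) with hG
    set U : Set X := {x | ∀ h ∈ G, |h x - h x₀| < 1 / (N + 1)} with hU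
    have hUopen : U ∈ 𝓝 x₀ := by
      have : U = ⋂ h ∈ G, (fun x => |h x - h x₀|) ⁻¹' Set.Iio (1 / (N + 1)) := by
        ext z; simp [hU, Set.mem_iInter]
      rw [this]
      refine (Filter.biInter_finset_mem G).2 fun h _ => ?_
      apply ContinuousAt.preimage_mem_nhds
      · exact ((h.continuous.sub continuous_const).abs).continuousAt
      · simpa using Iio_mem_nhds hNpos
    obtain ⟨xN, hxNU, hxNg⟩ := hdisc U hUopen
    refine ⟨(N, fN, xN), ⟨hfNA, hfN x₀ (Finset.mem_insert_self _ _),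
      hxNU fN (Finset.mem_insert_self _ _), hxNg⟩, ?_⟩
    intro p hp
    refine ⟨?_, ?_, ?_⟩
    · calc p.1 ≤ s.sup (fun p => p.1) := Finset.le_sup hp
        _ < N := by omega
    · exact hfN p.2.2 (Finset.mem_insert_of_mem (Finset.mem_image_of_mem _ hp))
    · exact hxNU p.2.1 (Finset.mem_insert_of_mem (Finset.mem_image_of_mem _ hp))
  set N : ℕ → ℕ := fun k => (q k).1
  set F : ℕ → C(X, ℝ) := fun k => (q k).2.1
  set Y : ℕ → X := fun k => (q k).2.2
  have hNmono : StrictMono N := fun m n hmn => (hqr m n hmn).1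
  have hNk : ∀ k, k ≤ N k := fun k => hNmono.le_apply
  have hinv : ∀ k : ℕ, 1 / ((N k : ℝ) + 1) ≤ 1 / ((k : ℝ) + 1) := by
    intro k
    apply one_div_le_one_div_of_le (by positivity)
    have : (k : ℝ) ≤ (N k : ℝ) := Nat.cast_le.2 (hNk k)
    linarith
  -- the three families of limits
  have hck : ∀ k, Tendsto (fun m => F m (Y k)) atTop (𝓝 (g (Y k))) := by
    intro k
    apply tendsto_of_abs_le_one_div
    filter_upwards [Filter.eventually_gt_atTop k] with m hm
    exact le_trans (le_of_lt (hqr k m hm).2.1) (hinv m)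
  have hdm : ∀ m, Tendsto (fun k => F m (Y k)) atTop (𝓝 (F m x₀)) := by
    intro m
    apply tendsto_of_abs_le_one_div
    filter_upwards [Filter.eventually_gt_atTop m] with k hk
    exact le_trans (le_of_lt (hqr m k hk).2.2) (hinv k)
  have hsx : Tendsto (fun m => F m x₀) atTop (𝓝 (g x₀)) := by
    apply tendsto_of_abs_le_one_div
    filter_upwards [] with m
    exact le_trans (le_of_lt (hqP m).2.1) (hinv m)
  -- Bolzano–Weierstrass on (g ∘ Y)
  have hbdd : ∀ k, g (Y k) ∈ Set.Icc (-M) M := fun k => abs_le.1 (hgM (Y k))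
  obtain ⟨r', hr'mem, φ, hφmono, hφtend⟩ := (isCompact_Icc (a := -M) (b := M)).tendsto_subseq hbdd
  have hrs := DL F (fun m => (hqP m).1) (Y ∘ φ) (fun k => g (Y (φ k))) (fun m => F m x₀) r' (g x₀)
    (fun k => hck (φ k)) hφtend
    (fun m => (hdm m).comp hφmono.tendsto_atTop) hsx
  have hfar : ε ≤ |r' - g x₀| := by
    have : Tendsto (fun k => |g (Y (φ k)) - g x₀|) atTop (𝓝 (|r' - g x₀|)) :=
      ((hφtend.sub_const _).abs)
    exact ge_of_tendsto this (Filter.Eventually.of_forall fun k => (hqP (φ k)).2.2.2)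
  rw [hrs] at hfar
  simp at hfar
  linarith


variable [CompactSpace X]

namespace GrothAux

variable (h : ℕ → C(X, ℝ))

def W (n : ℕ) : Set C(X, ℝ) := closure (convexHull ℝ (h '' Set.Ici n))

lemma W_convex (n : ℕ) : Convex ℝ (W h n) := (convex_convexHull ℝ _).closure

omit [CompactSpace X] in
lemma W_isClosed (n : ℕ) : IsClosed (W h n) := isClosed_closure

omit [CompactSpace X] in
lemma mem_W_self {n k : ℕ} (hk : n ≤ k) : h k ∈ W h n :=
  subset_closure (subset_convexHull ℝ _ ⟨k, hk, rfl⟩)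

omit [CompactSpace X] in
lemma W_antitone {n m : ℕ} (hnm : n ≤ m) : W h m ⊆ W h n :=
  closure_mono (convexHull_mono (Set.image_mono (Set.Ici_subset_Ici.2 hnm)))

lemma W_forall_le {n : ℕ} (Λ : C(X, ℝ) →L[ℝ] ℝ) {t : ℝ}
    (hgen : ∀ k, n ≤ k → Λ (h k) ≤ t) : ∀ w ∈ W h n, Λ w ≤ t := by
  intro w hw
  have hset : W h n ⊆ {w | Λ w ≤ t} := by
    apply closure_minimal
    · apply convexHull_min
      · rintro _ ⟨k, hk, rfl⟩; exact hgen k hk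
      · exact convex_halfSpace_le (by exact ⟨fun a b => map_add Λ a b, fun c a => map_smul Λ c a⟩) t
    · exact isClosed_le Λ.continuous continuous_const
  exact hset hw

lemma W_norm_le {M : ℝ} (hM : ∀ k, ‖h k‖ ≤ M) {n : ℕ} : ∀ w ∈ W h n, ‖w‖ ≤ M := by
  intro w hw
  have hset : W h n ⊆ Metric.closedBall 0 M := by
    apply closure_minimal
    · apply convexHull_min
      · rintro _ ⟨k, _, rfl⟩; simpa [mem_closedBall_zero_iff] using hM k
      · exact convex_closedBall 0 M
    · exact Metric.isClosed_closedBall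
  simpa [mem_closedBall_zero_iff] using hset hw

set_option maxHeartbeats 2000000 in
/-- Simons' inequality applied to `C(X)`: a measure-free Rainwater-type lemma. -/
lemma simons {M : ℝ} (hM : ∀ k, ‖h k‖ ≤ M)
    (hpt : ∀ x : X, Tendsto (fun k => h k x) atTop (𝓝 0))
    (μ : C(X, ℝ) →L[ℝ] ℝ) (hμ : ‖μ‖ ≤ 1) {α : ℝ} (hα : ∀ k, α ≤ μ (h k)) : α ≤ 0 := by
  rcases isEmpty_or_nonempty X with hX | hX
  · have h0 : h 0 = 0 := by ext x; exact hX.elim x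
    have := hα 0
    rw [h0] at this
    simpa using this
  by_contra hcon
  push_neg at hcon
  set q : ℝ := 1/2 with hq
  set ε : ℝ := α / 8 with hε
  have hεpos : 0 < ε := by positivity
  have hM0 : 0 ≤ M := le_trans (norm_nonneg _) (hM 0)
  -- summability helper
  have hsum : ∀ (u : ℕ → C(X, ℝ)), (∀ j, ‖u j‖ ≤ M) → Summable (fun j => q^(j+1) • u j) := by
    intro u hu
    apply Summable.of_norm_bounded (g := fun j => q^j * (q * M))
    · exact (summable_geometric_of_lt_one (by norm_num) (by norm_num)).mul_right _
    · intro j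
      have h1 : ‖q^(j+1)‖ = q^(j+1) := by
        rw [Real.norm_eq_abs, abs_of_nonneg (by positivity)]
      have hstep : ‖q^(j+1) • u j‖ ≤ ‖q^(j+1)‖ * ‖u j‖ := by
        have := NormedSpace.norm_smul_le (𝕜 := ℝ) (E := C(X, ℝ)) (q^(j+1)) (u j)
        simpa using this
      calc ‖q^(j+1) • u j‖ ≤ ‖q^(j+1)‖ * ‖u j‖ := hstep
        _ = q^(j+1) * ‖u j‖ := by rw [h1]
        _ ≤ q^(j+1) * M := by apply mul_le_mul_of_nonneg_left (hu j) (by positivity)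
        _ = q ^ j * (q * M) := by rw [pow_succ]; ring
  -- greedy choice
  have hpick : ∀ (w : C(X, ℝ)) (n : ℕ), ∃ v, v ∈ W h n ∧
      ∀ v' ∈ W h n, ‖w + q^n • v‖ ≤ ‖w + q^n • v'‖ + ε * (4⁻¹)^n := by
    intro w n
    set S := (fun v' => ‖w + q^n • v'‖) '' W h n with hS
    have hSne : S.Nonempty := ⟨_, ⟨h n, mem_W_self h le_rfl, rfl⟩⟩
    have hSbdd : BddBelow S := ⟨0, by rintro _ ⟨v', _, rfl⟩; positivity⟩
    obtain ⟨_, ⟨v, hv, rfl⟩, hlt⟩ := Real.lt_sInf_add_pos hSne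
      (show (0:ℝ) < ε * (4⁻¹)^n by positivity)
    refine ⟨v, hv, fun v' hv' => ?_⟩
    have := csInf_le hSbdd (Set.mem_image_of_mem _ hv')
    linarith
  choose pick hpick1 hpick2 using hpick
  set hd : ℕ → C(X, ℝ) := fun n => Nat.rec 0 (fun m ih => ih + q^(m+1) • pick ih m) n with hhd
  set Z : ℕ → C(X, ℝ) := fun n => pick (hd n) n with hZ
  have hd_succ : ∀ n, hd (n+1) = hd n + q^(n+1) • Z n := fun n => rfl
  have hZW : ∀ n, Z n ∈ W h n := fun n => hpick1 _ _
  have hZM : ∀ n, ‖Z n‖ ≤ M := fun n => W_norm_le h hM _ (W_antitone h (Nat.zero_le n) (hZW n))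
  have htsm : ∀ n, Summable (fun j => q^(j+1) • Z (n+j)) := fun n => hsum _ (fun j => hZM _)
  set t : ℕ → C(X, ℝ) := fun n => ∑' j, q^(j+1) • Z (n+j) with ht
  -- recurrence for tails
  have ht_succ : ∀ n, t n = q • Z n + q • t (n+1) := by
    intro n
    have h1 : t n = q^(0+1) • Z (n+0) + ∑' j, q^((j+1)+1) • Z (n+(j+1)) :=
      Summable.tsum_eq_zero_add (htsm n)
    have h2 : (∑' j, q^((j+1)+1) • Z (n+(j+1))) = q • t (n+1) := by
      have : ∀ j : ℕ, q^((j+1)+1) • Z (n+(j+1)) = q • (q^(j+1) • Z ((n+1)+j)) := by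
        intro j
        rw [show n+(j+1) = (n+1)+j from by omega, smul_smul, ← pow_succ']
      rw [tsum_congr this, Summable.tsum_const_smul _ (by
        have := (htsm (n+1)); exact this)]
    rw [h1, h2]
    simp [pow_one]
  -- geometric sums
  have hgeo : ∀ m : ℕ, ∑ j ∈ Finset.range m, q^(j+1) = 1 - q^m := by
    intro m
    induction m with
    | zero => simp
    | succ m ih => rw [Finset.sum_range_succ, ih, pow_succ]; norm_num [hq]; ring
  -- tails are in W n
  have htW : ∀ n, t n ∈ W h n := by
    intro n
    have hps := (htsm n).hasSum.tendsto_sum_nat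
    have hq0 : Tendsto (fun m : ℕ => q^m • Z n) atTop (𝓝 0) := by
      have hb : ∀ m : ℕ, ‖q^m • Z n‖ ≤ q^m * M := by
        intro m
        have hstep : ‖q^m • Z n‖ ≤ ‖q^m‖ * ‖Z n‖ := by
          have := NormedSpace.norm_smul_le (𝕜 := ℝ) (E := C(X, ℝ)) (q^m) (Z n)
          simpa using this
        calc ‖q^m • Z n‖ ≤ ‖q^m‖ * ‖Z n‖ := hstep
          _ = q^m * ‖Z n‖ := by rw [Real.norm_eq_abs, abs_of_nonneg (by positivity)]
          _ ≤ q^m * M := mul_le_mul_of_nonneg_left (hZM n) (by positivity)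
      have hg : Tendsto (fun m : ℕ => q^m * M) atTop (𝓝 0) := by
        have : Tendsto (fun m : ℕ => q^m) atTop (𝓝 0) :=
          tendsto_pow_atTop_nhds_zero_of_lt_one (by norm_num) (by norm_num)
        simpa using this.mul_const M
      exact squeeze_zero_norm hb hg
    have hcomb : Tendsto
        (fun m => (∑ j ∈ Finset.range m, q^(j+1) • Z (n+j)) + q^m • Z n) atTop (𝓝 (t n)) := by
      have := hps.add hq0
      simpa using this
    apply (W_isClosed h n).mem_of_tendsto hcomb
    filter_upwards [] with m
    classical
    have hmem : (∑ j ∈ Finset.range (m+1),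
        (if j < m then q^(j+1) else q^m) • (if j < m then Z (n+j) else Z n)) ∈ W h n := by
      apply (W_convex h n).sum_mem
      · intro j _
        by_cases hj : j < m <;> simp [hj] <;> positivity
      · rw [Finset.sum_range_succ]
        simp only [lt_irrefl, if_false]
        have hcongr : (∑ j ∈ Finset.range m, if j < m then q^(j+1) else q^m)
            = ∑ j ∈ Finset.range m, q^(j+1) :=
          Finset.sum_congr rfl (fun j hj => by rw [if_pos (Finset.mem_range.1 hj)])
        rw [hcongr, hgeo m]
        ring
      · intro j _
        by_cases hj : j < m
        · simp only [hj, if_true]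
          exact W_antitone h (Nat.le_add_right n j) (hZW (n+j))
        · simp only [hj, if_false]
          exact hZW n
    have heq : (∑ j ∈ Finset.range (m+1),
        (if j < m then q^(j+1) else q^m) • (if j < m then Z (n+j) else Z n))
        = (∑ j ∈ Finset.range m, q^(j+1) • Z (n+j)) + q^m • Z n := by
      rw [Finset.sum_range_succ]
      simp only [lt_irrefl, if_false]
      congr 1
      exact Finset.sum_congr rfl (fun j hj => by
        rw [if_pos (Finset.mem_range.1 hj), if_pos (Finset.mem_range.1 hj)])
    rwa [heq] at hmem
  have htM : ∀ n, ‖t n‖ ≤ M := fun n =>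
    W_norm_le h hM _ (W_antitone h (Nat.zero_le n) (htW n))
  -- decomposition z = hd n + q^n • t n
  set z : C(X, ℝ) := t 0 with hz
  have hz_decomp : ∀ n, z = hd n + q^n • t n := by
    intro n
    induction n with
    | zero => simp [hhd, hz]
    | succ n ih =>
      rw [ih, hd_succ n, ht_succ n]
      rw [smul_add, smul_smul, smul_smul, ← pow_succ]
      abel
  -- norm attainment
  obtain ⟨x₀, -, hx₀⟩ := isCompact_univ.exists_isMaxOn (Set.univ_nonempty)
    ((map_continuous z).abs.continuousOn)
  have hznorm : ‖z‖ = |z x₀| := by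
    apply le_antisymm
    · exact (ContinuousMap.norm_le z (abs_nonneg _)).2 fun x => by
        simpa [Real.norm_eq_abs] using hx₀ (Set.mem_univ x)
    · simpa [Real.norm_eq_abs] using z.norm_coe_le_norm x₀
  set s : ℝ := if 0 ≤ z x₀ then 1 else -1 with hs
  set ev : C(X, ℝ) →L[ℝ] ℝ := s • (ContinuousMap.evalCLM ℝ x₀) with hev
  have hev_apply : ∀ w : C(X, ℝ), ev w = s * w x₀ := fun w => rfl
  have habs_s : |s| = 1 := by
    by_cases h0 : 0 ≤ z x₀ <;> simp [hs, h0]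
  have hev_le : ∀ w : C(X, ℝ), ev w ≤ ‖w‖ := by
    intro w
    rw [hev_apply]
    calc s * w x₀ ≤ |s * w x₀| := le_abs_self _
      _ = |w x₀| := by rw [abs_mul, habs_s, one_mul]
      _ ≤ ‖w‖ := by simpa [Real.norm_eq_abs] using w.norm_coe_le_norm x₀
  have hev_z : ev z = ‖z‖ := by
    rw [hev_apply, hznorm]
    by_cases h0 : 0 ≤ z x₀
    · rw [hs, if_pos h0, one_mul, abs_of_nonneg h0]
    · rw [hs, if_neg h0, abs_of_neg (lt_of_not_ge h0)]; ring
  set a : ℕ → ℝ := fun n => ev (t n) with ha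
  have ha_le : ∀ n, a n ≤ M := fun n => (hev_le _).trans (htM n)
  -- α ≤ ‖z‖
  have hαz : α ≤ ‖z‖ := by
    have h1 : α ≤ μ z := by
      have := W_forall_le h (-μ) (t := -α) (fun k _ => by
        simpa using neg_le_neg (hα k)) z (htW 0)
      simpa using this
    calc α ≤ μ z := h1
      _ ≤ |μ z| := le_abs_self _
      _ ≤ ‖μ‖ * ‖z‖ := μ.le_opNorm z
      _ ≤ 1 * ‖z‖ := mul_le_mul_of_nonneg_right hμ (norm_nonneg _)
      _ = ‖z‖ := one_mul _
  -- key1 : ev (Z n) ≤ a n + ε * q^n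
  have hqpos : ∀ n : ℕ, (0:ℝ) < q^n := fun n => by positivity
  have key1 : ∀ n, ev (Z n) ≤ a n + ε * q^n := by
    intro n
    have h1 : ev (hd n) + q^n * ev (Z n) ≤ ‖hd n + q^n • Z n‖ := by
      have := hev_le (hd n + q^n • Z n)
      rwa [map_add, map_smul, smul_eq_mul] at this
    have h3 : ‖hd n + q^n • Z n‖ ≤ ‖hd n + q^n • t n‖ + ε * (4⁻¹)^n :=
      hpick2 (hd n) n (t n) (htW n)
    have h4 : ‖hd n + q^n • t n‖ = ‖z‖ := by rw [← hz_decomp n]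
    have h5 : ev (hd n) + q^n * a n = ‖z‖ := by
      have : ev z = ev (hd n) + q^n * ev (t n) := by
        rw [hz_decomp n, map_add, map_smul, smul_eq_mul]
      rw [← hev_z, this, ha]
    have h6 : (4⁻¹ : ℝ)^n = q^n * q^n := by
      rw [← mul_pow]; norm_num [hq]
    have h7 : q^n * ev (Z n) ≤ q^n * a n + ε * (q^n * q^n) := by
      rw [← h6]; linarith
    have h8 : q^n * ev (Z n) ≤ q^n * (a n + ε * q^n) := by linarith [h7]
    exact le_of_mul_le_mul_left (by linarith [h8]) (hqpos n)
  -- recurrence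
  have key_rec : ∀ n, a (n+1) = 2 * a n - ev (Z n) := by
    intro n
    have : a n = q * ev (Z n) + q * a (n+1) := by
      rw [ha]
      simp only []
      rw [ht_succ n, map_add, map_smul, map_smul, smul_eq_mul, smul_eq_mul]
    rw [this, hq]; ring
  -- lower bound on a n
  have hlow : ∀ n, a 0 - 2*ε*(1 - q^n) ≤ a n := by
    intro n
    induction n with
    | zero => simp
    | succ n ih =>
      have h1 : a n - ε * q^n ≤ a (n+1) := by
        rw [key_rec n]; linarith [key1 n]
      have h2 : (q:ℝ)^(n+1) = q^n * q := pow_succ q n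
      rw [h2]
      norm_num [hq] at h2 ⊢
      nlinarith [hqpos n]
  have hlow' : ∀ n, α - 2*ε ≤ a n := by
    intro n
    have h0 : a 0 = ‖z‖ := hev_z
    have := hlow n
    nlinarith [hqpos n, hαz]
  -- frequently a n - ev (Z n) ≤ ε
  have key3 : ∀ n₀, ∃ n, n₀ ≤ n ∧ a n - ev (Z n) ≤ ε := by
    intro n₀
    by_contra hcon3
    push_neg at hcon3
    have hstep : ∀ k : ℕ, a n₀ + k * ε ≤ a (n₀ + k) := by
      intro k
      induction k with
      | zero => simp
      | succ k ih =>
        have h1 := hcon3 (n₀ + k) (Nat.le_add_right _ _)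
        have h2 : a (n₀ + k) + ε < a (n₀ + k + 1) := by
          rw [key_rec (n₀ + k)]; linarith
        push_cast
        have : (n₀ + (k+1)) = (n₀ + k) + 1 := by omega
        rw [this]
        push_cast at ih
        linarith
    obtain ⟨k, hk⟩ := exists_nat_gt ((M - a n₀)/ε)
    have h1 : M - a n₀ < k * ε := by
      rw [div_lt_iff₀ hεpos] at hk
      linarith
    have := hstep k
    have := ha_le (n₀ + k)
    linarith
  -- the sSup bound
  set L : ℕ → ℝ := fun n => sSup ((fun k => s * h k x₀) '' Set.Ici n) with hL
  have hLbdd : ∀ n, BddAbove ((fun k => s * h k x₀) '' Set.Ici n) := by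
    intro n
    refine ⟨M, ?_⟩
    rintro _ ⟨k, _, rfl⟩
    calc s * h k x₀ ≤ |s * h k x₀| := le_abs_self _
      _ = |h k x₀| := by rw [abs_mul, habs_s, one_mul]
      _ ≤ ‖h k‖ := by simpa [Real.norm_eq_abs] using (h k).norm_coe_le_norm x₀
      _ ≤ M := hM k
  have hevZL : ∀ n, ev (Z n) ≤ L n := by
    intro n
    exact W_forall_le h ev (t := L n)
      (fun k hk => by
        rw [hev_apply]
        exact le_csSup (hLbdd n) ⟨k, hk, rfl⟩) (Z n) (hZW n)
  -- L n small eventually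
  obtain ⟨K, hK⟩ : ∃ K, ∀ k, K ≤ k → |h k x₀| ≤ ε := by
    have := Metric.tendsto_atTop.1 (hpt x₀) ε hεpos
    obtain ⟨K, hK⟩ := this
    exact ⟨K, fun k hk => by
      have := hK k hk
      rw [Real.dist_eq, sub_zero] at this
      linarith⟩
  have hLK : ∀ n, K ≤ n → L n ≤ ε := by
    intro n hn
    apply Real.sSup_le
    · rintro _ ⟨k, hk, rfl⟩
      calc s * h k x₀ ≤ |s * h k x₀| := le_abs_self _
        _ = |h k x₀| := by rw [abs_mul, habs_s, one_mul]
        _ ≤ ε := hK k (le_trans hn hk)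
    · exact hεpos.le
  obtain ⟨n, hnK, hn⟩ := key3 K
  have : α - 2*ε ≤ a n := hlow' n
  have h1 : a n ≤ ev (Z n) + ε := by linarith
  have h2 : ev (Z n) ≤ L n := hevZL n
  have h3 : L n ≤ ε := hLK n hnK
  rw [hε] at *
  linarith

end GrothAux

section CT
variable [CompactSpace X]



/-- Countable tightness of pointwise closures of sets of continuous functions,
for compact `X`. -/
lemma countable_tight  {S : Set (X → ℝ)}
    (hScont : ∀ f ∈ S, Continuous f) {g : X → ℝ} (hgc : Continuous g)
    (hg : g ∈ closure S) :
    ∃ S₀ : Set (X → ℝ), S₀ ⊆ S ∧ S₀.Countable ∧ g ∈ closure S₀ := by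
  classical
  have hSne : S.Nonempty := by
    rcases mem_closure_pi_iff.1 hg ∅ 1 one_pos with ⟨f, hf, -⟩
    exact ⟨f, hf⟩
  obtain ⟨f₀, hf₀⟩ := hSne
  have hcover : ∀ m : ℕ, ∃ s : Finset ↥S, ∀ t : Fin (m+1) → X,
      ∃ f ∈ s, ∀ i, |(f : X → ℝ) (t i) - g (t i)| < 1/(m+1) := by
    intro m
    set U : ↥S → Set (Fin (m+1) → X) := fun f =>
      {t | ∀ i, |(f : X → ℝ) (t i) - g (t i)| < 1/(m+1)} with hU
    have hUopen : ∀ f, IsOpen (U f) := by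
      intro f
      have : U f = ⋂ i, (fun t : Fin (m+1) → X => t i) ⁻¹'
          {x | |(f : X → ℝ) x - g x| < 1/(m+1)} := by
        ext t; simp [hU, Set.mem_iInter]
      rw [this]
      apply isOpen_iInter_of_finite
      intro i
      apply (continuous_apply i).isOpen_preimage
      have hcont : Continuous fun x => |(f : X → ℝ) x - g x| :=
        ((hScont f f.2).sub hgc).abs
      exact isOpen_lt hcont continuous_const
    have hcov : (Set.univ : Set (Fin (m+1) → X)) ⊆ ⋃ f, U f := by
      intro t _
      obtain ⟨f, hfS, hf⟩ := mem_closure_pi_iff.1 hg (Finset.image t Finset.univ) (1/(m+1))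
        (by positivity)
      refine Set.mem_iUnion.2 ⟨⟨f, hfS⟩, fun i => hf (t i) ?_⟩
      exact Finset.mem_image_of_mem t (Finset.mem_univ i)
    obtain ⟨s, hs⟩ := isCompact_univ.elim_finite_subcover U hUopen hcov
    refine ⟨s, fun t => ?_⟩
    obtain ⟨f, hfs, hf⟩ := Set.mem_iUnion₂.1 (hs (Set.mem_univ t))
    exact ⟨f, hfs, hf⟩
  choose sfam hsfam using hcover
  refine ⟨insert f₀ (⋃ m, (fun f : ↥S => (f : X → ℝ)) '' (sfam m : Set ↥S)), ?_, ?_, ?_⟩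
  · intro f hf
    rcases Set.mem_insert_iff.1 hf with rfl | hf
    · exact hf₀
    · obtain ⟨m, hm⟩ := Set.mem_iUnion.1 hf
      obtain ⟨f', -, rfl⟩ := hm
      exact f'.2
  · apply Set.Countable.insert
    apply Set.countable_iUnion
    intro m
    exact ((sfam m).finite_toSet.image _).countable
  · rw [mem_closure_pi_iff]
    intro F δ hδ
    rcases F.eq_empty_or_nonempty with rfl | hFne
    · exact ⟨f₀, Set.mem_insert _ _, by simp⟩
    obtain ⟨n, hn⟩ := exists_nat_one_div_lt hδ
    set m : ℕ := max n F.card with hm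
    have h1 : (1:ℝ)/(m+1) ≤ 1/(n+1) := by
      apply one_div_le_one_div_of_le (by positivity)
      have : (n:ℝ) ≤ m := Nat.cast_le.2 (le_max_left _ _)
      linarith
    set l := F.toList with hl
    have hlen : l.length = F.card := Finset.length_toList F
    obtain ⟨x₁, hx₁⟩ := hFne
    set t : Fin (m+1) → X := fun i => if h : (i:ℕ) < l.length then l.get ⟨i, h⟩ else x₁ with htdef
    obtain ⟨f, hfs, hf⟩ := hsfam m t
    refine ⟨(f : X → ℝ), Set.mem_insert_iff.2 (Or.inr
      (Set.mem_iUnion.2 ⟨m, Set.mem_image_of_mem _ hfs⟩)), ?_⟩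
    intro x hx
    have hxl : x ∈ l := Finset.mem_toList.2 hx
    obtain ⟨j, hj⟩ := List.mem_iff_get.1 hxl
    have hjm : (j : ℕ) < m + 1 := by
      have h2 := j.isLt
      have hcm : F.card ≤ m := le_max_right _ _
      omega
    have htj : t ⟨(j:ℕ), hjm⟩ = x := by
      rw [htdef]
      simp only []
      rw [dif_pos (by exact j.2 : ((⟨(j:ℕ), hjm⟩ : Fin (m+1)) : ℕ) < l.length)]
      simpa using hj
    have := hf ⟨(j:ℕ), hjm⟩
    rw [htj] at this
    calc |(f:X→ℝ) x - g x| < 1/(m+1) := this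
      _ ≤ 1/(n+1) := h1
      _ < δ := hn

end CT

section EX
variable [CompactSpace X]



/-- From a countable set with compact pointwise closure consisting of continuous
functions, one can extract a pointwise convergent sequence to any point of its closure. -/
lemma seq_extraction  {S₀ : Set (X → ℝ)}
    (hcount : S₀.Countable)
    (hcomp : IsCompact (closure S₀))
    (hclcont : ∀ f ∈ closure S₀, Continuous f)
    {g : X → ℝ} (hgc : Continuous g) (hg : g ∈ closure S₀) :
    ∃ h : ℕ → (X → ℝ), (∀ j, h j ∈ S₀) ∧ ∀ x, Tendsto (fun j => h j x) atTop (𝓝 (g x)) := by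
  classical
  have hS₀ne : S₀.Nonempty := by
    rcases mem_closure_pi_iff.1 hg ∅ 1 one_pos with ⟨f, hf, -⟩
    exact ⟨f, hf⟩
  rcases isEmpty_or_nonempty X with hX | hX
  · obtain ⟨f₀, hf₀⟩ := hS₀ne
    exact ⟨fun _ => f₀, fun _ => hf₀, fun x => (hX.elim x)⟩
  obtain ⟨e, he⟩ := hcount.exists_eq_range hS₀ne
  have heS : ∀ n, e n ∈ S₀ := fun n => he ▸ Set.mem_range_self n
  have hecont : ∀ n, Continuous (e n) := fun n => hclcont _ (subset_closure (heS n))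
  -- the metrizable factor
  set φ : X → ℝ × (ℕ → ℝ) := fun x => (g x, fun n => e n x) with hφ
  have hφcont : Continuous φ := by
    refine Continuous.prodMk hgc ?_
    exact continuous_pi fun n => hecont n
  set Y : Set (ℝ × (ℕ → ℝ)) := Set.range φ with hY
  set φ' : X → ↥Y := fun x => ⟨φ x, Set.mem_range_self x⟩ with hφ'
  have hφ'cont : Continuous φ' := hφcont.subtype_mk _
  have hφ'surj : Function.Surjective φ' := by
    rintro ⟨y, x, rfl⟩
    exact ⟨x, rfl⟩
  have hYcomp : CompactSpace ↥Y := isCompact_iff_compactSpace.1 (isCompact_range hφcont)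
  -- dense countable sequence in Y
  obtain ⟨D, hDcount, hDdense⟩ := TopologicalSpace.exists_countable_dense ↥Y
  have hDne : D.Nonempty := hDdense.nonempty
  obtain ⟨dseq, hdseq⟩ := hDcount.exists_eq_range hDne
  -- lift to points of X
  have hlift : ∀ i, ∃ u : X, φ' u = dseq i := fun i => hφ'surj (dseq i)
  choose y hy using hlift
  -- diagonal sequence
  have hsel : ∀ j : ℕ, ∃ f ∈ S₀, ∀ x ∈ Finset.image y (Finset.range (j+1)),
      |f x - g x| < 1/(j+1) := fun j =>
    mem_closure_pi_iff.1 hg (Finset.image y (Finset.range (j+1))) (1/(j+1)) (by positivity)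
  choose h hhS₀ hh using hsel
  have hconvT : ∀ i, Tendsto (fun j => h j (y i)) atTop (𝓝 (g (y i))) := by
    intro i
    apply tendsto_of_abs_le_one_div
    filter_upwards [Filter.eventually_ge_atTop i] with j hj
    have : y i ∈ Finset.image y (Finset.range (j+1)) :=
      Finset.mem_image_of_mem y (Finset.mem_range.2 (by omega))
    exact le_of_lt (hh j (y i) this)
  refine ⟨h, hhS₀, ?_⟩
  intro x
  by_contra hnot
  rw [Metric.tendsto_atTop] at hnot
  push_neg at hnot
  obtain ⟨ε, hεpos, hfreq⟩ := hnot
  have hfreq' : ∃ᶠ j in atTop, ε ≤ |h j x - g x| := by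
    rw [Filter.frequently_atTop]
    intro a
    obtain ⟨j, hja, hjd⟩ := hfreq a
    exact ⟨j, hja, by rwa [Real.dist_eq] at hjd⟩
  obtain ⟨ψ, hψmono, hψ⟩ := extraction_of_frequently_atTop hfreq'
  -- ultrafilter limit of the subsequence
  set 𝒰 : Ultrafilter ℕ := Ultrafilter.of atTop with h𝒰
  have h𝒰le : (𝒰 : Filter ℕ) ≤ atTop := Ultrafilter.of_le atTop
  obtain ⟨F, hFmem, hFlim⟩ := hcomp.ultrafilter_le_nhds
      (𝒰.map fun k => h (ψ k)) (by
    rw [Ultrafilter.coe_map, Filter.le_principal_iff, Filter.mem_map]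
    exact Filter.univ_mem' fun k => subset_closure (hhS₀ (ψ k)))
  have hFcont : Continuous F := hclcont F hFmem
  have hFpt : ∀ u, Tendsto (fun k => h (ψ k) u) (𝒰 : Filter ℕ) (𝓝 (F u)) := by
    intro u
    exact ((continuous_apply u).tendsto F).comp hFlim
  -- F agrees with g on the lifted points
  have hFy : ∀ i, F (y i) = g (y i) := by
    intro i
    refine tendsto_nhds_unique (hFpt (y i)) ?_
    exact ((hconvT i).comp hψmono.tendsto_atTop).mono_left h𝒰le
  -- F factors through φ
  have hfactor : ∀ u v, φ u = φ v → F u = F v := by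
    intro u v huv
    have hg_uv : g u = g v := congrArg Prod.fst huv
    have he_uv : ∀ n, e n u = e n v := fun n => congrFun (congrArg Prod.snd huv) n
    have hh_uv : ∀ j, h j u = h j v := by
      intro j
      obtain ⟨n, hn⟩ := he ▸ hhS₀ j
      rw [← hn]
      exact he_uv n
    refine tendsto_nhds_unique (hFpt u) ?_
    have : (fun k => h (ψ k) u) = fun k => h (ψ k) v := funext fun k => hh_uv (ψ k)
    rw [this]
    exact hFpt v
  -- the induced map on Y
  set Fhat : ↥Y → ℝ := fun p => F (Classical.choose p.2) with hFhat
  have hFhatspec : ∀ u : X, Fhat (φ' u) = F u := by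
    intro u
    apply hfactor
    exact Classical.choose_spec ((φ' u).2)
  have hquot : IsQuotientMap φ' := by
    apply IsClosedMap.isQuotientMap
    · exact hφ'cont.isClosedMap
    · exact hφ'cont
    · exact hφ'surj
  have hFhatcont : Continuous Fhat := by
    rw [hquot.continuous_iff]
    have : Fhat ∘ φ' = F := funext hFhatspec
    rw [this]
    exact hFcont
  -- density: φ' x is a limit of a sequence from the dseq family
  have hxmem : φ' x ∈ closure D := hDdense (φ' x)
  obtain ⟨u, huD, hulim⟩ := mem_closure_iff_seq_limit.1 hxmem
  have husel : ∀ k, ∃ i, u k = dseq i := by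
    intro k
    have := huD k
    rw [hdseq] at this
    obtain ⟨i, hi⟩ := this
    exact ⟨i, hi.symm⟩
  choose σ hσ using husel
  have huy : ∀ k, u k = φ' (y (σ k)) := fun k => by rw [hσ k, hy (σ k)]
  -- F x = g x
  have hFx : F x = g x := by
    have h1 : Tendsto (fun k => F (y (σ k))) atTop (𝓝 (F x)) := by
      have : Tendsto (fun k => Fhat (u k)) atTop (𝓝 (Fhat (φ' x))) :=
        (hFhatcont.tendsto _).comp hulim
      rw [hFhatspec x] at this
      apply this.congr
      intro k
      rw [huy k, hFhatspec]
    have h2 : Tendsto (fun k => g (y (σ k))) atTop (𝓝 (g x)) := by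
      have hc1 : Continuous fun p : ↥Y => (p : ℝ × (ℕ → ℝ)).1 :=
        continuous_fst.comp continuous_subtype_val
      have : Tendsto (fun k => ((u k : ℝ × (ℕ → ℝ))).1) atTop (𝓝 ((φ' x : ℝ × (ℕ → ℝ))).1) :=
        (hc1.tendsto _).comp hulim
      have heq : ∀ k, ((u k : ℝ × (ℕ → ℝ))).1 = g (y (σ k)) := by
        intro k
        rw [huy k]
      have heq2 : ((φ' x : ℝ × (ℕ → ℝ))).1 = g x := rfl
      rw [heq2] at this
      exact this.congr heq
    have h3 : (fun k => F (y (σ k))) = fun k => g (y (σ k)) := funext fun k => hFy (σ k)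
    rw [h3] at h1
    exact tendsto_nhds_unique h1 h2
  -- contradiction with the ε-separation
  have hsep : Tendsto (fun k => |h (ψ k) x - g x|) (𝒰 : Filter ℕ) (𝓝 |F x - g x|) :=
    ((hFpt x).sub_const _).abs
  have : ε ≤ |F x - g x| :=
    ge_of_tendsto hsep (Filter.Eventually.of_forall fun k => hψ k)
  rw [hFx] at this
  simp at this
  linarith

end EX

section FWD
variable [CompactSpace X]



omit [CompactSpace X] in
lemma weakspace_eval_tendsto {ι : Type*} {l : Filter ι} {f : ι → C(X, ℝ)}
    {G : WeakSpace ℝ C(X, ℝ)}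
    (h : Tendsto (fun i => toWeakSpace ℝ C(X, ℝ) (f i)) l (𝓝 G))
    (μ : C(X, ℝ) →L[ℝ] ℝ) :
    Tendsto (fun i => μ (f i)) l (𝓝 (μ ((toWeakSpace ℝ C(X, ℝ)).symm G))) := by
  have hcont : Continuous fun w : WeakSpace ℝ C(X, ℝ) =>
      ((topDualPairing ℝ C(X, ℝ)).flip) w μ := WeakBilin.eval_continuous _ μ
  exact (hcont.tendsto G).comp h

theorem forward_dir
    (A : Set C(X, ℝ))
    (hcpt : IsCompact (closure (toWeakSpace ℝ C(X, ℝ) '' A))) :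
    (∀ (f : ℕ → C(X, ℝ)), (∀ m, f m ∈ A) →
        ∀ (x : ℕ → X),
        ∀ (c d : ℕ → ℝ) (r s : ℝ),
          (∀ n, Tendsto (fun m => f m (x n)) atTop (𝓝 (c n))) →
          Tendsto c atTop (𝓝 r) →
          (∀ m, Tendsto (fun n => f m (x n)) atTop (𝓝 (d m))) →
          Tendsto d atTop (𝓝 s) →
          r = s) := by
  intro f hfA x c d r s hc hcr hd hds
  set 𝒰 : Ultrafilter ℕ := Ultrafilter.of atTop with h𝒰
  have h𝒰le : (𝒰 : Filter ℕ) ≤ atTop := Ultrafilter.of_le atTop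
  obtain ⟨G, hGmem, hG⟩ := hcpt.ultrafilter_le_nhds
      (𝒰.map fun m => toWeakSpace ℝ C(X, ℝ) (f m)) (by
    rw [Ultrafilter.coe_map, Filter.le_principal_iff, Filter.mem_map]
    exact Filter.univ_mem' fun m => subset_closure ⟨f m, hfA m, rfl⟩)
  set g : C(X, ℝ) := (toWeakSpace ℝ C(X, ℝ)).symm G with hgdef
  have hGtend : Tendsto (fun m => toWeakSpace ℝ C(X, ℝ) (f m)) (𝒰 : Filter ℕ) (𝓝 G) := hG
  -- ultrafilter on the indices of x, with limit point y
  set 𝒱 : Ultrafilter ℕ := Ultrafilter.of atTop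
  have h𝒱le : (𝒱 : Filter ℕ) ≤ atTop := Ultrafilter.of_le atTop
  obtain ⟨y, -, hy⟩ := isCompact_univ.ultrafilter_le_nhds (𝒱.map x) (by
    rw [Ultrafilter.coe_map, Filter.le_principal_iff, Filter.mem_map]
    exact Filter.univ_mem' fun m => Set.mem_univ _)
  have hy : Tendsto x (𝒱 : Filter ℕ) (𝓝 y) := hy
  -- c n = g (x n)
  have hcg : ∀ n, c n = g (x n) := fun n =>
    tendsto_nhds_unique ((hc n).mono_left h𝒰le)
      (weakspace_eval_tendsto hGtend (ContinuousMap.evalCLM ℝ (x n)))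
  -- d m = f m y
  have hdg : ∀ m, d m = f m y := fun m =>
    tendsto_nhds_unique ((hd m).mono_left h𝒱le) (((f m).continuous.tendsto y).comp hy)
  -- r = g y
  have hr : r = g y := by
    refine tendsto_nhds_unique (hcr.mono_left h𝒱le) ?_
    have : Tendsto (fun n => g (x n)) (𝒱 : Filter ℕ) (𝓝 (g y)) :=
      (g.continuous.tendsto y).comp hy
    exact this.congr fun n => (hcg n).symm
  -- s = g y
  have hs : s = g y := by
    refine tendsto_nhds_unique (hds.mono_left h𝒰le) ?_
    have := weakspace_eval_tendsto hGtend (ContinuousMap.evalCLM ℝ y)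
    exact this.congr fun m => by simp [ContinuousMap.evalCLM, hdg m]
  rw [hr, hs]

end FWD

section BWD
variable [CompactSpace X]

theorem backward_dir (A : Set C(X, ℝ)) (hbd : Bornology.IsBounded A)
    (DL : ∀ (f : ℕ → C(X, ℝ)), (∀ m, f m ∈ A) →
        ∀ (x : ℕ → X),
        ∀ (c d : ℕ → ℝ) (r s : ℝ),
          (∀ n, Tendsto (fun m => f m (x n)) atTop (𝓝 (c n))) →
          Tendsto c atTop (𝓝 r) →
          (∀ m, Tendsto (fun n => f m (x n)) atTop (𝓝 (d m))) →
          Tendsto d atTop (𝓝 s) →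
          r = s) :
    IsCompact (closure (toWeakSpace ℝ C(X, ℝ) '' A)) := by
  classical
  haveI hT2 : T2Space (WeakSpace ℝ C(X, ℝ)) := by
    constructor
    intro f g hfg
    have hfg' : (toWeakSpace ℝ C(X, ℝ)).symm f ≠ (toWeakSpace ℝ C(X, ℝ)).symm g :=
      fun hh => hfg ((toWeakSpace ℝ C(X, ℝ)).symm.injective hh)
    obtain ⟨μ, hμ⟩ := SeparatingDual.exists_separating_of_ne (R := ℝ) hfg'
    have hev : Continuous fun w : WeakSpace ℝ C(X, ℝ) =>
        ((topDualPairing ℝ C(X, ℝ)).flip) w μ := WeakBilin.eval_continuous _ μ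
    exact separated_by_continuous hev hμ
  rcases A.eq_empty_or_nonempty with rfl | hAne
  · simp
  obtain ⟨M, hMA⟩ := isBounded_iff_forall_norm_le.1 hbd
  have hMx : ∀ f ∈ A, ∀ x, |f x| ≤ M := by
    intro f hf x
    have h1 : ‖f x‖ ≤ ‖f‖ := f.norm_coe_le_norm x
    rw [Real.norm_eq_abs] at h1
    exact h1.trans (hMA f hf)
  obtain ⟨f₀, hf₀⟩ := hAne
  have hM0 : 0 ≤ M := le_trans (norm_nonneg _) (hMA f₀ hf₀)
  set A' : Set (X → ℝ) := (fun f : C(X, ℝ) => ⇑f) '' A with hA'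
  set Q : Set (X → ℝ) := Set.pi Set.univ (fun _ : X => Set.Icc (-M) M) with hQ
  have hQcomp : IsCompact Q := isCompact_univ_pi fun _ => isCompact_Icc
  have hQclosed : IsClosed Q := isClosed_set_pi fun _ _ => isClosed_Icc
  have hA'Q : A' ⊆ Q := by
    rintro _ ⟨f, hf, rfl⟩ x -
    exact ⟨neg_le_of_abs_le (hMx f hf x), le_of_abs_le (hMx f hf x)⟩
  set K₀ : Set (X → ℝ) := closure A' with hK₀
  have hK₀Q : K₀ ⊆ Q := closure_minimal hA'Q hQclosed
  have hK₀comp : IsCompact K₀ := hQcomp.of_isClosed_subset isClosed_closure hK₀Q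
  have hK₀cont : ∀ f ∈ K₀, Continuous f := fun f hf => lemA hMx DL hf
  have hK₀bd : ∀ f ∈ K₀, ∀ x, |f x| ≤ M := by
    intro f hf x
    have := hK₀Q hf x (Set.mem_univ x)
    exact abs_le.2 ⟨this.1, this.2⟩
  set θ : ↥K₀ → C(X, ℝ) := fun p => ⟨p.1, hK₀cont _ p.2⟩ with hθ
  have hθeval : ∀ μ : C(X, ℝ) →L[ℝ] ℝ, Continuous fun p : ↥K₀ => μ (θ p) := by
    intro μ
    rw [continuous_iff_continuousAt]
    intro g₀
    by_contra hnot
    rw [ContinuousAt, Metric.tendsto_nhds] at hnot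
    push_neg at hnot
    obtain ⟨ε, hεpos, hfreq⟩ := hnot
    set B' : Set ↥K₀ := {p | ε ≤ |μ (θ p) - μ (θ g₀)|} with hB'
    have hg₀cl : g₀ ∈ closure B' := by
      rw [mem_closure_iff_nhds]
      intro U hU
      by_contra hcon
      rw [Set.not_nonempty_iff_eq_empty] at hcon
      apply hfreq
      filter_upwards [hU] with p hp
      rw [Real.dist_eq]
      by_contra hge
      have hmem : p ∈ U ∩ B' := ⟨hp, hge⟩
      rw [hcon] at hmem
      exact hmem
    have hgcl2 : (g₀ : X → ℝ) ∈ closure (Subtype.val '' B') :=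
      image_closure_subset_closure_image continuous_subtype_val ⟨g₀, hg₀cl, rfl⟩
    set S : Set (X → ℝ) := Subtype.val '' B' with hSdef
    have hSK : S ⊆ K₀ := by rintro _ ⟨p, -, rfl⟩; exact p.2
    have hScont : ∀ f ∈ S, Continuous f := fun f hf => hK₀cont f (hSK hf)
    have hg₀c : Continuous (g₀ : X → ℝ) := hK₀cont _ g₀.2
    obtain ⟨S₀, hS₀S, hS₀count, hgS₀⟩ := countable_tight hScont hg₀c hgcl2
    have hS₀K : S₀ ⊆ K₀ := hS₀S.trans hSK
    have hclS₀K : closure S₀ ⊆ K₀ := closure_minimal hS₀K isClosed_closure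
    have hclS₀comp : IsCompact (closure S₀) :=
      hK₀comp.of_isClosed_subset isClosed_closure hclS₀K
    obtain ⟨h, hhS₀, hconv⟩ := seq_extraction hS₀count hclS₀comp
      (fun f hf => hK₀cont f (hclS₀K hf)) hg₀c hgS₀
    have hsel : ∀ j, ∃ p : ↥K₀, p ∈ B' ∧ (p : X → ℝ) = h j := by
      intro j
      obtain ⟨p, hp, hpeq⟩ := hS₀S (hhS₀ j)
      exact ⟨p, hp, hpeq⟩
    choose p hpB hpeq using hsel
    set v : ℕ → C(X, ℝ) := fun j => θ (p j) - θ g₀ with hv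
    have habs_sub : ∀ a b : ℝ, |a - b| ≤ |a| + |b| := by
      intro a b
      calc |a - b| = |a + (-b)| := by ring_nf
        _ ≤ |a| + |(-b)| := abs_add_le _ _
        _ = |a| + |b| := by rw [abs_neg]
    have hvnorm : ∀ j, ‖v j‖ ≤ 2*M := by
      intro j
      apply (ContinuousMap.norm_le _ (by linarith)).2
      intro x
      rw [Real.norm_eq_abs]
      have h1 : |(p j : X → ℝ) x| ≤ M := hK₀bd _ (p j).2 x
      have h2 : |(g₀ : X → ℝ) x| ≤ M := hK₀bd _ g₀.2 x
      have hvx : (v j) x = (p j : X → ℝ) x - (g₀ : X → ℝ) x := rfl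
      rw [hvx]
      calc |(p j : X → ℝ) x - (g₀ : X → ℝ) x| ≤ |(p j : X → ℝ) x| + |(g₀ : X → ℝ) x| :=
            habs_sub _ _
        _ ≤ 2*M := by linarith
    have hvpt : ∀ x, Tendsto (fun j => v j x) atTop (𝓝 0) := by
      intro x
      have h1 := (hconv x).sub_const ((g₀ : X → ℝ) x)
      rw [sub_self] at h1
      apply h1.congr
      intro j
      have : (v j) x = (p j : X → ℝ) x - (g₀ : X → ℝ) x := rfl
      rw [this, hpeq j]
    have hvsep : ∀ j, ε ≤ |μ (v j)| := by
      intro j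
      have hm := hpB j
      rw [hB'] at hm
      have : μ (v j) = μ (θ (p j)) - μ (θ g₀) := by rw [hv]; simp [map_sub]
      rw [this]
      exact hm
    have hcore : ∀ u : ℕ → C(X, ℝ), (∀ k, ‖u k‖ ≤ 2*M) →
        (∀ x, Tendsto (fun k => u k x) atTop (𝓝 0)) → (∀ k, ε ≤ μ (u k)) → False := by
      intro u hu1 hu2 hu3
      set c : ℝ := max ‖μ‖ 1 with hc
      have hc1 : (0:ℝ) < c := lt_of_lt_of_le one_pos (le_max_right _ _)
      set μ' : C(X, ℝ) →L[ℝ] ℝ := c⁻¹ • μ with hμ'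
      have hμ'norm : ‖μ'‖ ≤ 1 := by
        have hle : ‖μ'‖ ≤ ‖(c⁻¹ : ℝ)‖ * ‖μ‖ := by
          have := ContinuousLinearMap.opNorm_smul_le (c⁻¹ : ℝ) μ
          simpa [hμ'] using this
        have h2 : ‖(c⁻¹ : ℝ)‖ = c⁻¹ := by
          rw [norm_inv, Real.norm_eq_abs, abs_of_pos hc1]
        rw [h2] at hle
        have h3 : c⁻¹ * ‖μ‖ ≤ 1 := by
          rw [inv_mul_le_iff₀ hc1, mul_one]
          exact le_max_left _ _
        linarith
      have hα : ∀ k, c⁻¹ * ε ≤ μ' (u k) := by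
        intro k
        rw [hμ']
        simp only [ContinuousLinearMap.coe_smul', Pi.smul_apply, smul_eq_mul]
        exact mul_le_mul_of_nonneg_left (hu3 k) (inv_nonneg.2 hc1.le)
      have hsim := GrothAux.simons u hu1 hu2 μ' hμ'norm hα
      have hinv : (0:ℝ) < c⁻¹ := inv_pos.2 hc1
      nlinarith
    have hsign : (∃ᶠ j in atTop, 0 ≤ μ (v j)) ∨ (∃ᶠ j in atTop, μ (v j) < 0) := by
      by_contra hcon
      push_neg at hcon
      obtain ⟨h1, h2⟩ := hcon
      obtain ⟨j, hj1, hj2⟩ := (h1.and h2).exists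
      linarith
    rcases hsign with hfr | hfr
    · obtain ⟨ψ, hψmono, hψ⟩ := extraction_of_frequently_atTop hfr
      apply hcore (fun k => v (ψ k)) (fun k => hvnorm _)
        (fun x => (hvpt x).comp hψmono.tendsto_atTop)
      intro k
      have hs := hvsep (ψ k)
      rwa [abs_of_nonneg (hψ k)] at hs
    · obtain ⟨ψ, hψmono, hψ⟩ := extraction_of_frequently_atTop hfr
      apply hcore (fun k => -(v (ψ k)))
      · intro k
        rw [norm_neg]
        exact hvnorm _
      · intro x
        have := ((hvpt x).comp hψmono.tendsto_atTop).neg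
        simpa using this
      · intro k
        have hs := hvsep (ψ k)
        rw [abs_of_neg (hψ k)] at hs
        rw [map_neg]
        exact hs
  haveI : CompactSpace ↥K₀ := isCompact_iff_compactSpace.1 hK₀comp
  have hΘ : Continuous fun p : ↥K₀ => toWeakSpace ℝ C(X, ℝ) (θ p) := by
    apply WeakBilin.continuous_of_continuous_eval
    intro μ
    exact hθeval μ
  have hrange : IsCompact (Set.range fun p : ↥K₀ => toWeakSpace ℝ C(X, ℝ) (θ p)) :=
    isCompact_range hΘ
  have hsub : toWeakSpace ℝ C(X, ℝ) '' A ⊆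
      Set.range (fun p : ↥K₀ => toWeakSpace ℝ C(X, ℝ) (θ p)) := by
    rintro _ ⟨f, hf, rfl⟩
    exact ⟨⟨⇑f, subset_closure ⟨f, hf, rfl⟩⟩, rfl⟩
  exact hrange.of_isClosed_subset isClosed_closure (closure_minimal hsub hrange.isClosed)

end BWD

end GrothendieckProof

/-- Grothendieck's compactness criterion (1952): a norm-bounded subset `A` of the
Banach space `C(X)` of continuous real-valued functions on a compact Hausdorff space `X`
is relatively compact in the weak topology iff the double limit condition holds
for sequences from `A` and from `X`. -/
theorem grothendieck_weak_compactness_criterion {X : Type*} [TopologicalSpace X]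
    [CompactSpace X] [T2Space X]
    (A : Set C(X, ℝ)) (hbd : Bornology.IsBounded A) :
    IsCompact (closure (toWeakSpace ℝ C(X, ℝ) '' A)) ↔
      (∀ (f : ℕ → C(X, ℝ)), (∀ m, f m ∈ A) →
        ∀ (x : ℕ → X),
        ∀ (c d : ℕ → ℝ) (r s : ℝ),
          (∀ n, Tendsto (fun m => f m (x n)) atTop (𝓝 (c n))) →
          Tendsto c atTop (𝓝 r) →
          (∀ m, Tendsto (fun n => f m (x n)) atTop (𝓝 (d m))) →
          Tendsto d atTop (𝓝 s) →
          r = s) := by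
  constructor
  · exact forward_dir A
  · exact backward_dir A hbd
end

section
/- Let L be a first-order language, M a nonempty L-structure, α and β finite types, and φ an L-formula in the free variables α ⊕ β. Then the following are equivalent: (1) φ has the order property in M, i.e., there exist sequences a : ℕ → (α → M) and b : ℕ → (β → M) such that either (for all m, n: φ(a m, b n) holds iff m < n) or (for all m, n: φ(a m, b n) holds iff n < m); (2) there exist sequences a : ℕ → (α → M) and b : ℕ → (β → M) and real numbers r ≠ s such that, writing χ(m,n) = 1 if φ(a m, b n) holds and 0 otherwise, for every n the limit c(n) = lim_m χ(m,n) exists with lim_n c(n) = r, and for every m the limit d(m) = lim_n χ(m,n) exists with lim_m d(m) = s. Equivalently, φ is stable in M (has no order property in M) if and only if for all such sequences the two iterated limits of χ, whenever both exist, are equal. -/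
open Filter Topology FirstOrder

/-!
If the iterated limits of the indicator of `φ(a m, b n)` differ, they are `0` and `1`, so
(up to swapping the roles of `m` and `n`) `φ(a m, b n)` eventually fails as `m → ∞` for every
large fixed `n`, and eventually holds as `n → ∞` for every large fixed `m`. Picking the indices
`n₀, m₀, n₁, m₁, …` alternately, each beyond what the previously chosen ones require, yields
subsequences along which `φ(a mᵢ, b nⱼ)` holds exactly when `i < j`. Conversely such a half graph
has iterated limits `0` and `1`.
-/

section FiniteValued

variable {ι κ X : Type*} [TopologicalSpace X] [T1Space X] {S : Set X}

theorem Filter.Tendsto.eventually_eq_of_finite {f : ι → X} {l : Filter ι} {x : X}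
    (hS : S.Finite) (hf : ∀ᶠ k in l, f k ∈ S) (h : Tendsto f l (𝓝 x)) :
    ∀ᶠ k in l, f k = x := by
  have hnhds : (S \ {x})ᶜ ∈ 𝓝 x :=
    hS.sdiff.isClosed.isOpen_compl.mem_nhds fun hx => hx.2 rfl
  filter_upwards [h hnhds, hf] with k hk hkS
  by_contra hne
  exact hk ⟨hkS, hne⟩

theorem eventually_eventually_eq_of_tendsto_of_finite {F : ι → κ → X} {la : Filter ι}
    {lb : Filter κ} [la.NeBot] [lb.NeBot] {c : κ → X} {r : X} (hS : S.Finite)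
    (hF : ∀ i j, F i j ∈ S) (hc : ∀ j, Tendsto (F · j) la (𝓝 (c j)))
    (hr : Tendsto c lb (𝓝 r)) :
    r ∈ S ∧ ∀ᶠ j in lb, ∀ᶠ i in la, F i j = r := by
  have hcS : ∀ j, c j ∈ S := fun j =>
    hS.isClosed.mem_of_tendsto (hc j) (.of_forall (hF · j))
  refine ⟨hS.isClosed.mem_of_tendsto hr (.of_forall hcS), ?_⟩
  filter_upwards [hr.eventually_eq_of_finite hS (.of_forall hcS)] with j hj
  exact hj ▸ (hc j).eventually_eq_of_finite hS (.of_forall (hF · j))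

end FiniteValued

theorem exists_half_graph_of_eventually {X Y : Type*} {P : X → Y → Prop} {la : Filter X}
    {lb : Filter Y} [la.NeBot] [lb.NeBot] (hX : ∀ᶠ x in la, ∀ᶠ y in lb, P x y)
    (hY : ∀ᶠ y in lb, ∀ᶠ x in la, ¬P x y) :
    ∃ (f : ℕ → X) (g : ℕ → Y), ∀ i j, P (f i) (g j) ↔ i < j := by
  -- `y` is chosen before `x`, so that the pair can also satisfy `¬P x y`.
  let good : X × Y → Prop := fun p =>
    (∀ᶠ y in lb, P p.1 y) ∧ (∀ᶠ x in la, ¬P x p.2) ∧ ¬P p.1 p.2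
  let after : X × Y → X × Y → Prop := fun p q => P p.1 q.2 ∧ ¬P q.1 p.2
  obtain ⟨t, htgood, ht⟩ := exists_seq_of_forall_finset_exists good after fun s hs => by
    obtain ⟨y, hy, hsy⟩ := (hY.and ((eventually_all_finset s).2 fun p hp => (hs p hp).1)).exists
    obtain ⟨x, ⟨hx, hxy⟩, hsx⟩ := ((hX.and hy).and
      ((eventually_all_finset s).2 fun p hp => (hs p hp).2.1)).exists
    exact ⟨(x, y), ⟨hx, hy, hxy⟩, fun p hp => ⟨hsy p hp, hsx p hp⟩⟩
  refine ⟨fun i => (t i).1, fun j => (t j).2, fun i j => ?_⟩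
  rcases lt_trichotomy i j with hij | rfl | hji
  · exact iff_of_true (ht i j hij).1 hij
  · exact iff_of_false (htgood i).2.2 (lt_irrefl i)
  · exact iff_of_false (ht j i hji).2 hji.not_gt

theorem tendsto_indicator_of_forall_iff_lt {P : ℕ → ℕ → Prop} [DecidableRel P]
    (h : ∀ m n, P m n ↔ m < n) :
    (∀ n, Tendsto (fun m => if P m n then (1 : ℝ) else 0) atTop (𝓝 0)) ∧
      ∀ m, Tendsto (fun n => if P m n then (1 : ℝ) else 0) atTop (𝓝 1) :=
  ⟨fun n => tendsto_const_nhds.congr' <| (eventually_ge_atTop n).mono fun m hm =>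
      (if_neg ((h m n).not.2 hm.not_gt)).symm,
    fun m => tendsto_const_nhds.congr' <| (eventually_gt_atTop m).mono fun n hn =>
      (if_pos ((h m n).2 hn)).symm⟩

open Classical in
theorem order_property_iff_double_limit_failure_general {L : Language} {M : Type*} [L.Structure M]
    {α β : Type*}
    (φ : L.Formula (α ⊕ β)) :
    (∃ (a : ℕ → α → M) (b : ℕ → β → M),
        (∀ m n : ℕ, φ.Realize (Sum.elim (a m) (b n)) ↔ m < n) ∨
        (∀ m n : ℕ, φ.Realize (Sum.elim (a m) (b n)) ↔ n < m)) ↔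
      (∃ (a : ℕ → α → M) (b : ℕ → β → M) (c d : ℕ → ℝ) (r s : ℝ),
        r ≠ s ∧
        (∀ n, Tendsto
          (fun m => if φ.Realize (Sum.elim (a m) (b n)) then (1 : ℝ) else 0)
          atTop (𝓝 (c n))) ∧
        Tendsto c atTop (𝓝 r) ∧
        (∀ m, Tendsto
          (fun n => if φ.Realize (Sum.elim (a m) (b n)) then (1 : ℝ) else 0)
          atTop (𝓝 (d m))) ∧
        Tendsto d atTop (𝓝 s)) := by
  constructor
  · rintro ⟨a, b, h | h⟩
    · obtain ⟨hc, hd⟩ := tendsto_indicator_of_forall_iff_lt h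
      exact ⟨a, b, _, _, 0, 1, zero_ne_one, hc, tendsto_const_nhds, hd, tendsto_const_nhds⟩
    · obtain ⟨hd, hc⟩ := tendsto_indicator_of_forall_iff_lt
        (P := fun n m => φ.Realize (Sum.elim (a m) (b n))) fun n m => h m n
      exact ⟨a, b, _, _, 1, 0, one_ne_zero, hc, tendsto_const_nhds, hd, tendsto_const_nhds⟩
  · rintro ⟨a, b, c, d, r, s, hrs, hc, hr, hd, hs⟩
    set P : ℕ → ℕ → Prop := fun m n => φ.Realize (Sum.elim (a m) (b n))
    have hχ : ∀ m n, (if P m n then (1 : ℝ) else 0) ∈ ({0, 1} : Set ℝ) := by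
      intro m n; split_ifs <;> simp
    obtain ⟨hr01, hr'⟩ := eventually_eventually_eq_of_tendsto_of_finite (Set.toFinite _) hχ hc hr
    obtain ⟨hs01, hs'⟩ :=
      eventually_eventually_eq_of_tendsto_of_finite (Set.toFinite _) (fun n m => hχ m n) hd hs
    simp only [Set.mem_insert_iff, Set.mem_singleton_iff] at hr01 hs01
    rcases hr01 with rfl | rfl <;> rcases hs01 with rfl | rfl <;> norm_num at hrs
    · obtain ⟨f, g, hfg⟩ := exists_half_graph_of_eventually (P := P)
        (hs'.mono fun _ h => h.mono fun _ h => by simpa using h)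
        (hr'.mono fun _ h => h.mono fun _ h => by simpa using h)
      exact ⟨a ∘ f, b ∘ g, .inl hfg⟩
    · obtain ⟨g, f, hfg⟩ := exists_half_graph_of_eventually (P := fun n m => P m n)
        (hr'.mono fun _ h => h.mono fun _ h => by simpa using h)
        (hs'.mono fun _ h => h.mono fun _ h => by simpa using h)
      exact ⟨a ∘ f, b ∘ g, .inr fun m n => hfg n m⟩

open Classical in
/-- Translation of stability into Grothendieck's double limit condition: a formula `φ`
has the order property in a structure `M` iff there are sequences witnessing distinct
iterated limits of the indicator function of `φ`. -/
theorem order_property_iff_double_limit_failure {L : Language} {M : Type*} [L.Structure M]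
    [Nonempty M] {α β : Type*} [Finite α] [Finite β]
    (φ : L.Formula (α ⊕ β)) :
    (∃ (a : ℕ → α → M) (b : ℕ → β → M),
        (∀ m n : ℕ, φ.Realize (Sum.elim (a m) (b n)) ↔ m < n) ∨
        (∀ m n : ℕ, φ.Realize (Sum.elim (a m) (b n)) ↔ n < m)) ↔
      (∃ (a : ℕ → α → M) (b : ℕ → β → M) (c d : ℕ → ℝ) (r s : ℝ),
        r ≠ s ∧
        (∀ n, Tendsto
          (fun m => if φ.Realize (Sum.elim (a m) (b n)) then (1 : ℝ) else 0)
          atTop (𝓝 (c n))) ∧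
        Tendsto c atTop (𝓝 r) ∧
        (∀ m, Tendsto
          (fun n => if φ.Realize (Sum.elim (a m) (b n)) then (1 : ℝ) else 0)
          atTop (𝓝 (d m))) ∧
        Tendsto d atTop (𝓝 s)) :=
  order_property_iff_double_limit_failure_general φ
end
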